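/- arXiv:1609.09586 — 5 statements merged into one kernel-verified Lean document; each statement's English description precedes it below -/
import Mathlib

section
/- Under the hypotheses of the main inversion theorem, the unique formal power series solution T of T(z) = z + Λ(T(z)) is analytic at 0, its radius of convergence equals ρ = τ − Λ(τ), and lim_{x→ρ⁻} T(x) = τ (equivalently, the series ∑_n ([z^n]T) ρ^n converges with sum τ). -/
open scoped ENNReal NNReal

/-- Composition Λ(T) of the power series with coefficient sequence `lam` with `T`
(correct whenever `T` has zero constant term, since then `[z^n](T^m) = 0` for `m > n`). -/
noncomputable def substComp (lam : ℕ → ℝ) (T : PowerSeries ℝ) : PowerSeries ℝ :=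
  PowerSeries.mk fun n => ∑ m ∈ Finset.range (n + 1), lam m * PowerSeries.coeff n (T ^ m)

open Finset

lemma aux_pow_congr (A B : PowerSeries ℝ) (hA : PowerSeries.constantCoeff A = 0)
    (hB : PowerSeries.constantCoeff B = 0) (N : ℕ)
    (h : ∀ i, i ≤ N → PowerSeries.coeff i A = PowerSeries.coeff i B) :
    ∀ m, 1 ≤ m → ∀ n, n ≤ N + 1 → (n ≤ N ∨ 2 ≤ m) →
      PowerSeries.coeff n (A ^ m) = PowerSeries.coeff n (B ^ m) := by
  intro m
  induction m with
  | zero => omega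
  | succ m ih =>
    intro _ n hn hor
    rcases Nat.eq_zero_or_pos m with hm0 | hm1
    · subst hm0
      simp only [zero_add, pow_one]
      exact h n (by omega)
    · rw [pow_succ, pow_succ, PowerSeries.coeff_mul, PowerSeries.coeff_mul]
      apply Finset.sum_congr rfl
      rintro ⟨i, j⟩ hij
      rw [Finset.HasAntidiagonal.mem_antidiagonal] at hij
      rcases Nat.eq_zero_or_pos j with hj0 | hj1
      · subst hj0
        rw [PowerSeries.coeff_zero_eq_constantCoeff, hA, hB, mul_zero, mul_zero]
      · have hiN : i ≤ N := by omega
        rw [ih hm1 i (by omega) (Or.inl hiN)]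
        rcases Nat.lt_or_ge j (N + 1) with hj | hj
        · rw [h j (by omega)]
        · have hi0 : i = 0 := by omega
          subst hi0
          have : PowerSeries.coeff 0 (B ^ m) = 0 := by
            rw [PowerSeries.coeff_zero_eq_constantCoeff, map_pow, hB, zero_pow (by omega)]
          rw [this, zero_mul, zero_mul]

lemma aux_poly_coeff_nonneg (p : Polynomial ℝ) (hp : ∀ n, 0 ≤ p.coeff n) :
    ∀ m n, 0 ≤ (p ^ m).coeff n := by
  intro m
  induction m with
  | zero =>
    intro n
    simp only [pow_zero, Polynomial.coeff_one]
    positivity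
  | succ m ih =>
    intro n
    rw [pow_succ, Polynomial.coeff_mul]
    exact Finset.sum_nonneg fun ij _ => mul_nonneg (ih ij.1) (hp ij.2)

lemma aux_poly_partial_le (p : Polynomial ℝ) (hp : ∀ n, 0 ≤ p.coeff n) (x : ℝ) (hx : 0 ≤ x)
    (M : ℕ) : ∑ n ∈ Finset.range M, p.coeff n * x ^ n ≤ p.eval x := by
  have hK : p.natDegree < max M (p.natDegree + 1) := by omega
  rw [Polynomial.eval_eq_sum_range' hK]
  apply Finset.sum_le_sum_of_subset_of_nonneg
  · exact Finset.range_subset_range.2 (le_max_left _ _)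
  · intro n _ _
    exact mul_nonneg (hp n) (pow_nonneg hx n)

lemma aux_nq_summable (q : ℝ) (h0 : 0 ≤ q) (h1 : q < 1) :
    Summable (fun n : ℕ => (n : ℝ) * q ^ (n - 1)) := by
  rw [← summable_nat_add_iff 1]
  have h2 : Summable (fun n : ℕ => (n : ℝ) ^ 1 * q ^ n) :=
    summable_pow_mul_geometric_of_norm_lt_one 1 (by rwa [Real.norm_eq_abs, abs_of_nonneg h0])
  have h3 : Summable (fun n : ℕ => q ^ n) := summable_geometric_of_lt_one h0 h1
  have := (h2.add h3)
  apply this.congr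
  intro n
  push_cast
  ring

lemma aux_between (R : ℝ≥0∞) (x : ℝ) (hx : 0 ≤ x) (h : ENNReal.ofReal x < R) :
    ∃ y : ℝ, x < y ∧ ENNReal.ofReal y < R := by
  rcases eq_or_ne R ⊤ with hR | hR
  · exact ⟨x + 1, by linarith, by simp [hR]⟩
  · have hxR : x < R.toReal := (ENNReal.ofReal_lt_iff_lt_toReal hx hR).1 h
    refine ⟨(x + R.toReal) / 2, by linarith, ?_⟩
    rw [ENNReal.ofReal_lt_iff_lt_toReal (by linarith) hR]
    linarith

lemma aux_deriv (lam : ℕ → ℝ) (hnonneg : ∀ n, 0 ≤ lam n)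
    (R : ℝ≥0∞)
    (Lam : ℝ → ℝ)
    (hLam : ∀ x : ℝ, ENNReal.ofReal |x| < R → HasSum (fun n => lam n * x ^ n) (Lam x))
    (Lam' : ℝ → ℝ)
    (hLam' : ∀ x : ℝ, ENNReal.ofReal |x| < R → HasDerivAt Lam (Lam' x) x) :
    ∀ x : ℝ, 0 ≤ x → ENNReal.ofReal x < R →
      Summable (fun n : ℕ => (n : ℝ) * lam n * x ^ (n - 1)) ∧
      Lam' x = ∑' n : ℕ, (n : ℝ) * lam n * x ^ (n - 1) := by
  intro x hx hxR
  obtain ⟨r, hxr, hrR⟩ := aux_between R x hx hxR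
  have hr0 : 0 < r := lt_of_le_of_lt hx hxr
  obtain ⟨y, hry, hyR⟩ := aux_between R r hr0.le hrR
  have hy0 : 0 < y := hr0.trans hry
  have hsy : Summable fun n => lam n * y ^ n :=
    (hLam y (by rwa [abs_of_nonneg hy0.le])).summable
  set Stot : ℝ := ∑' n, lam n * y ^ n with hStot
  have hterm : ∀ n, lam n * y ^ n ≤ Stot := fun n =>
    Summable.le_tsum hsy n fun m _ => mul_nonneg (hnonneg m) (pow_nonneg hy0.le m)
  set q : ℝ := r / y with hq
  have hq0 : 0 ≤ q := div_nonneg hr0.le hy0.le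
  have hq1 : q < 1 := (div_lt_one hy0).2 hry
  set u : ℕ → ℝ := fun n => (Stot / y) * ((n : ℝ) * q ^ (n - 1)) with hu
  have hu_sum : Summable u := (aux_nq_summable q hq0 hq1).mul_left _
  have hbound : ∀ (n : ℕ) (z : ℝ), z ∈ Set.Ioo (-r) r →
      ‖(n : ℝ) * lam n * z ^ (n - 1)‖ ≤ u n := by
    intro n z hz
    rcases Nat.eq_zero_or_pos n with h0 | h1
    · subst h0; simp [hu]
    have hzr : |z| ≤ r := by
      rw [abs_le]; exact ⟨hz.1.le, hz.2.le⟩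
    have h1' : ‖(n : ℝ) * lam n * z ^ (n - 1)‖ ≤ (n : ℝ) * lam n * r ^ (n - 1) := by
      rw [Real.norm_eq_abs, abs_mul, abs_mul, abs_pow,
        abs_of_nonneg (by positivity : (0:ℝ) ≤ (n:ℝ)), abs_of_nonneg (hnonneg n)]
      have := pow_le_pow_left₀ (abs_nonneg z) hzr (n - 1)
      nlinarith [mul_nonneg (Nat.cast_nonneg (α := ℝ) n) (hnonneg n)]
    refine h1'.trans ?_
    have hrq : r ^ (n - 1) = q ^ (n - 1) * y ^ (n - 1) := by
      rw [← mul_pow, hq, div_mul_cancel₀ _ hy0.ne']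
    have h2 : lam n * y ^ (n - 1) ≤ Stot / y := by
      rw [le_div_iff₀ hy0]
      have hyy : y ^ (n - 1) * y = y ^ n := by
        rw [← pow_succ]; congr 1; omega
      calc lam n * y ^ (n-1) * y = lam n * y ^ n := by rw [mul_assoc, hyy]
        _ ≤ Stot := hterm n
    calc (n : ℝ) * lam n * r ^ (n - 1) = (lam n * y ^ (n-1)) * ((n:ℝ) * q ^ (n-1)) := by
          rw [hrq]; ring
      _ ≤ (Stot / y) * ((n:ℝ) * q ^ (n-1)) := by
          apply mul_le_mul_of_nonneg_right h2
          positivity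
      _ = u n := rfl
  have hderivn : ∀ (n : ℕ) (z : ℝ), z ∈ Set.Ioo (-r) r →
      HasDerivAt (fun w => lam n * w ^ n) ((n : ℝ) * lam n * z ^ (n - 1)) z := by
    intro n z _
    have := (hasDerivAt_pow n z).const_mul (lam n)
    have e : (n:ℝ) * lam n * z ^ (n - 1) = lam n * ((n:ℝ) * z ^ (n - 1)) := by ring
    rw [e]; exact this
  have h0mem : (0 : ℝ) ∈ Set.Ioo (-r) r := by constructor <;> simp [hr0]
  have hsum0 : Summable fun n => lam n * (0 : ℝ) ^ n := by
    apply summable_of_ne_finset_zero (s := {0})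
    intro n hn
    simp only [Finset.mem_singleton] at hn
    rw [zero_pow hn, mul_zero]
  have hxmem : x ∈ Set.Ioo (-r) r := ⟨by linarith, hxr⟩
  have hmain : HasDerivAt (fun w => ∑' n, lam n * w ^ n)
      (∑' n : ℕ, (n : ℝ) * lam n * x ^ (n - 1)) x :=
    hasDerivAt_tsum_of_isPreconnected hu_sum isOpen_Ioo
      (Convex.isPreconnected (convex_Ioo _ _)) hderivn hbound h0mem hsum0 hxmem
  have heq : (fun w => ∑' n, lam n * w ^ n) =ᶠ[nhds x] Lam := by
    filter_upwards [isOpen_Ioo.mem_nhds hxmem] with z hz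
    have hzR : ENNReal.ofReal |z| < R := by
      refine lt_of_le_of_lt ?_ hrR
      apply ENNReal.ofReal_le_ofReal
      rw [abs_le]; exact ⟨hz.1.le, hz.2.le⟩
    exact (hLam z hzR).tsum_eq
  have hLamD : HasDerivAt Lam (∑' n : ℕ, (n : ℝ) * lam n * x ^ (n - 1)) x :=
    hmain.congr_of_eventuallyEq heq.symm
  constructor
  · exact Summable.of_norm_bounded hu_sum fun n => hbound n x hxmem
  · exact (hLam' x (by rwa [abs_of_nonneg hx])).unique hLamD

/-!
STATEMENT 2: Under the hypotheses of the main inversion theorem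
(Λ = ∑_{n≥2} λ_n x^n with nonnegative coefficients, analytic at 0 with radius of
convergence R > 0, with lim_{x→R⁻} Λ'(x) > 1 — stated, equivalently by
monotonicity of Λ', as ∃ x ∈ (0,R), Λ'(x) > 1 — and τ the unique solution in
(0,R) of Λ'(τ) = 1), the unique formal power series solution T of
T(z) = z + Λ(T(z)) with zero constant term is analytic at 0, its radius of
convergence equals ρ = τ − Λ(τ), and the series ∑_n ([z^n]T)·ρ^n converges
with sum τ (equivalently lim_{x→ρ⁻} T(x) = τ).
-/
theorem stmt2
    (lam : ℕ → ℝ) (hlam0 : lam 0 = 0) (hlam1 : lam 1 = 0)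
    (hnonneg : ∀ n, 0 ≤ lam n)
    (R : ℝ≥0∞) (hRpos : 0 < R)
    (Lam : ℝ → ℝ)
    (hLam : ∀ x : ℝ, ENNReal.ofReal |x| < R → HasSum (fun n => lam n * x ^ n) (Lam x))
    (hdiv : ∀ x : ℝ, R < ENNReal.ofReal |x| → ¬ Summable (fun n => lam n * x ^ n))
    (Lam' : ℝ → ℝ)
    (hLam' : ∀ x : ℝ, ENNReal.ofReal |x| < R → HasDerivAt Lam (Lam' x) x)
    (hlim : ∃ x : ℝ, 0 < x ∧ ENNReal.ofReal x < R ∧ 1 < Lam' x)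
    (τ : ℝ) (hτpos : 0 < τ) (hτR : ENNReal.ofReal τ < R) (hτ1 : Lam' τ = 1)
    (ρ : ℝ) (hρ : ρ = τ - Lam τ)
    (T : PowerSeries ℝ)
    (hT0 : PowerSeries.constantCoeff T = 0)
    (hTeq : T = PowerSeries.X + substComp lam T) :
    0 < ρ ∧
    (∀ x : ℝ, |x| < ρ → Summable fun n => PowerSeries.coeff n T * x ^ n) ∧
    (∀ x : ℝ, ρ < |x| → ¬ Summable fun n => PowerSeries.coeff n T * x ^ n) ∧
    HasSum (fun n => PowerSeries.coeff n T * ρ ^ n) τ := by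
  have hrec : ∀ n, PowerSeries.coeff n T =
      (if n = 1 then (1:ℝ) else 0) +
        ∑ m ∈ Finset.range (n+1), lam m * PowerSeries.coeff n (T ^ m) := by
    intro n
    conv_lhs => rw [hTeq]
    rw [map_add, PowerSeries.coeff_X, substComp, PowerSeries.coeff_mk]
  have ht0 : PowerSeries.coeff 0 T = 0 := by
    rw [PowerSeries.coeff_zero_eq_constantCoeff]; exact hT0
  -- vanishing of low coefficients of powers
  have hvanish : ∀ m n : ℕ, n < m → PowerSeries.coeff n (T ^ m) = 0 := by
    intro m
    induction m with
    | zero => intro n h; exact absurd h (Nat.not_lt_zero n)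
    | succ m ih =>
      intro n h
      rw [pow_succ, PowerSeries.coeff_mul]
      apply Finset.sum_eq_zero
      rintro ⟨i, j⟩ hij
      rw [Finset.HasAntidiagonal.mem_antidiagonal] at hij
      by_cases hi : i < m
      · rw [ih i hi, zero_mul]
      · have hj0 : j = 0 := by omega
        subst hj0
        rw [PowerSeries.coeff_zero_eq_constantCoeff, hT0, mul_zero]
  -- nonnegativity of coefficients of powers
  have htm : ∀ n m : ℕ, 0 ≤ PowerSeries.coeff n (T ^ m) := by
    intro n
    induction n using Nat.strong_induction_on with
    | _ n ih =>
    have hstep : ∀ m, 1 ≤ m → 0 ≤ PowerSeries.coeff n (T ^ (m+1)) := by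
      intro m hm
      rw [pow_succ, PowerSeries.coeff_mul]
      apply Finset.sum_nonneg
      rintro ⟨i, j⟩ hij
      rw [Finset.HasAntidiagonal.mem_antidiagonal] at hij
      by_cases hj0 : j = 0
      · subst hj0
        rw [PowerSeries.coeff_zero_eq_constantCoeff, hT0, mul_zero]
      by_cases hjn : j = n
      · have hi0 : i = 0 := by omega
        subst hi0
        rw [PowerSeries.coeff_zero_eq_constantCoeff, map_pow, hT0, zero_pow (by omega), zero_mul]
      · have h1 : 0 ≤ PowerSeries.coeff i (T ^ m) := ih i (by omega) m
        have h2 : 0 ≤ PowerSeries.coeff j T := by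
          have := ih j (by omega) 1
          rwa [pow_one] at this
        exact mul_nonneg h1 h2
    have hTn : 0 ≤ PowerSeries.coeff n T := by
      rw [hrec n]
      apply add_nonneg
      · split <;> norm_num
      apply Finset.sum_nonneg
      intro m _
      match m with
      | 0 => rw [hlam0]; simp
      | 1 => rw [hlam1]; simp
      | (m+2) => exact mul_nonneg (hnonneg _) (hstep (m+1) (by omega))
    intro m
    match m with
    | 0 =>
      rw [pow_zero, PowerSeries.coeff_one]
      split <;> norm_num
    | 1 => rw [pow_one]; exact hTn
    | (m+2) => exact hstep (m+1) (by omega)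
  have htnn : ∀ n, 0 ≤ PowerSeries.coeff n T := by
    intro n; have := htm n 1; rwa [pow_one] at this
  have ht1 : PowerSeries.coeff 1 T = 1 := by
    rw [hrec 1]
    simp [Finset.sum_range_succ, hlam0, hlam1]
  -- derivative facts
  have hd := aux_deriv lam hnonneg R Lam hLam Lam' hLam'
  have hm0 : ∃ m : ℕ, 2 ≤ m ∧ 0 < lam m := by
    by_contra hcon
    push_neg at hcon
    obtain ⟨x0, hx0pos, hx0R, hx0gt⟩ := hlim
    have hz : ∀ n : ℕ, (n:ℝ) * lam n * x0 ^ (n-1) = 0 := by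
      intro n
      match n with
      | 0 => simp
      | 1 => simp [hlam1]
      | (n+2) =>
        have : lam (n+2) = 0 := le_antisymm (hcon (n+2) (by omega)) (hnonneg _)
        simp [this]
    have h2 := (hd x0 hx0pos.le hx0R).2
    rw [h2, (tsum_congr hz).trans tsum_zero] at hx0gt
    linarith
  have hmono : ∀ a b : ℝ, 0 ≤ a → a ≤ b → ENNReal.ofReal b < R → Lam' a ≤ Lam' b := by
    intro a b ha hab hbR
    have haR : ENNReal.ofReal a < R := lt_of_le_of_lt (ENNReal.ofReal_le_ofReal hab) hbR
    rw [(hd a ha haR).2, (hd b (ha.trans hab) hbR).2]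
    refine Summable.tsum_le_tsum (fun n => ?_) (hd a ha haR).1 (hd b (ha.trans hab) hbR).1
    exact mul_le_mul_of_nonneg_left (pow_le_pow_left₀ ha hab _)
      (mul_nonneg (Nat.cast_nonneg n) (hnonneg n))
  have hstrict : ∀ a b : ℝ, 0 ≤ a → a < b → ENNReal.ofReal b < R → Lam' a < Lam' b := by
    intro a b ha hab hbR
    obtain ⟨m0, hm02, hm0pos⟩ := hm0
    have haR : ENNReal.ofReal a < R := lt_of_le_of_lt (ENNReal.ofReal_le_ofReal hab.le) hbR
    rw [(hd a ha haR).2, (hd b (ha.trans hab.le) hbR).2]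
    refine Summable.tsum_lt_tsum_of_nonneg
      (fun n => mul_nonneg (mul_nonneg (Nat.cast_nonneg n) (hnonneg n)) (pow_nonneg ha _))
      (fun n => mul_le_mul_of_nonneg_left (pow_le_pow_left₀ ha hab.le _)
        (mul_nonneg (Nat.cast_nonneg n) (hnonneg n)))
      (i := m0) ?_ (hd b (ha.trans hab.le) hbR).1
    have : a ^ (m0 - 1) < b ^ (m0 - 1) :=
      pow_lt_pow_left₀ hab ha (by omega)
    have hc : (0:ℝ) < (m0:ℝ) * lam m0 := by
      apply mul_pos _ hm0pos
      have h5 : (0:ℕ) < m0 := by omega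
      exact_mod_cast h5
    exact mul_lt_mul_of_pos_left this hc
  have hslope : ∀ a b : ℝ, 0 ≤ a → a < b → ENNReal.ofReal b < R →
      ∃ c, a < c ∧ c < b ∧ (b - Lam b) - (a - Lam a) = (1 - Lam' c) * (b - a) := by
    intro a b ha hab hbR
    have hderiv : ∀ u ∈ Set.Icc a b, HasDerivAt (fun w => w - Lam w) (1 - Lam' u) u := by
      intro u hu
      have huR : ENNReal.ofReal |u| < R := by
        rw [abs_of_nonneg (ha.trans hu.1)]
        exact lt_of_le_of_lt (ENNReal.ofReal_le_ofReal hu.2) hbR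
      exact (hasDerivAt_id u).sub (hLam' u huR)
    have hcont : ContinuousOn (fun w => w - Lam w) (Set.Icc a b) := fun u hu =>
      ((hderiv u hu).continuousAt).continuousWithinAt
    obtain ⟨c, hc, hceq⟩ := exists_hasDerivAt_eq_slope (fun w => w - Lam w)
      (fun u => 1 - Lam' u) hab hcont (fun u hu => hderiv u (Set.mem_Icc_of_Ioo hu))
    refine ⟨c, hc.1, hc.2, ?_⟩
    rw [hceq, div_mul_cancel₀ _ (sub_ne_zero.2 hab.ne')]
  have hLam0 : Lam 0 = 0 := by
    have h0 : ENNReal.ofReal |(0:ℝ)| < R := by simpa using hRpos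
    have h1 := hLam 0 h0
    have h2 : HasSum (fun n : ℕ => lam n * (0:ℝ)^n) 0 := by
      have heq : (fun n : ℕ => lam n * (0:ℝ)^n) = fun _ => (0:ℝ) := by
        funext n
        match n with
        | 0 => simp [hlam0]
        | (n+1) => simp
      rw [heq]; exact hasSum_zero
    exact h1.unique h2
  have hρpos : 0 < ρ := by
    obtain ⟨c, hc1, hc2, hceq⟩ := hslope 0 τ le_rfl hτpos hτR
    have hlt : Lam' c < 1 := by
      rw [← hτ1]; exact hstrict c τ hc1.le hc2 hτR
    rw [hLam0] at hceq
    rw [hρ]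
    nlinarith
  have hLamτnn : 0 ≤ Lam τ := by
    have h1 := hLam τ (by rwa [abs_of_nonneg hτpos.le])
    rw [← h1.tsum_eq]
    exact tsum_nonneg fun n => mul_nonneg (hnonneg n) (pow_nonneg hτpos.le n)
  have hρτ : ρ ≤ τ := by rw [hρ]; linarith
  have hρR : ENNReal.ofReal ρ < R := lt_of_le_of_lt (ENNReal.ofReal_le_ofReal hρτ) hτR
  -- main partial sum bound
  have hS : ∀ x : ℝ, 0 ≤ x → x ≤ ρ → ∀ N,
      ∑ n ∈ Finset.range (N+1), PowerSeries.coeff n T * x ^ n ≤ τ := by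
    intro x hx hxρ N
    induction N with
    | zero => simpa [ht0] using hτpos.le
    | succ N IH =>
      set S : ℝ := ∑ n ∈ Finset.range (N+1), PowerSeries.coeff n T * x ^ n with hSdef
      have hS0 : 0 ≤ S :=
        Finset.sum_nonneg fun n _ => mul_nonneg (htnn n) (pow_nonneg hx n)
      have hSτ : S ≤ τ := IH
      -- the truncated polynomial
      set Q : Polynomial ℝ := PowerSeries.trunc (N+1) T with hQdef
      have hQcoeff : ∀ i, Q.coeff i = if i < N + 1 then PowerSeries.coeff i T else 0 := by
        intro i; rw [hQdef, PowerSeries.coeff_trunc]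
      have hQnn : ∀ i, 0 ≤ Q.coeff i := by
        intro i; rw [hQcoeff]; split
        · exact htnn i
        · exact le_refl 0
      have hQ0 : PowerSeries.constantCoeff (Q : PowerSeries ℝ) = 0 := by
        rw [← PowerSeries.coeff_zero_eq_constantCoeff, Polynomial.coeff_coe, hQcoeff]
        simp [ht0]
      have hQagree : ∀ i, i ≤ N → PowerSeries.coeff i T = PowerSeries.coeff i (Q : PowerSeries ℝ) := by
        intro i hi
        rw [Polynomial.coeff_coe, hQcoeff, if_pos (by omega)]
      have hQdeg : Q.natDegree < N + 1 := by
        have h1 : Q.degree < ((N+1 : ℕ) : WithBot ℕ) := PowerSeries.degree_trunc_lt T (N+1)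
        by_cases hQz : Q = 0
        · rw [hQz]; simp
        · exact (Polynomial.natDegree_lt_iff_degree_lt hQz).2 h1
      have hQeval : Q.eval x = S := by
        rw [Polynomial.eval_eq_sum_range' hQdeg x]
        apply Finset.sum_congr rfl
        intro n hn
        rw [hQcoeff, if_pos (Finset.mem_range.1 hn)]
      -- the per-power bound
      have hXm : ∀ m, 2 ≤ m →
          ∑ n ∈ Finset.range (N+2), PowerSeries.coeff n (T ^ m) * x ^ n ≤ S ^ m := by
        intro m hm
        have h1 : ∀ n ∈ Finset.range (N+2),
            PowerSeries.coeff n (T ^ m) * x ^ n = (Q ^ m).coeff n * x ^ n := by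
          intro n hn
          rw [aux_pow_congr T (Q : PowerSeries ℝ) hT0 hQ0 N hQagree m (by omega) n
            (by have := Finset.mem_range.1 hn; omega) (Or.inr hm)]
          rw [← Polynomial.coe_pow, Polynomial.coeff_coe]
        rw [Finset.sum_congr rfl h1]
        calc ∑ n ∈ Finset.range (N+2), (Q ^ m).coeff n * x ^ n
            ≤ (Q ^ m).eval x := aux_poly_partial_le (Q ^ m) (aux_poly_coeff_nonneg Q hQnn m) x hx _
          _ = (Q.eval x) ^ m := by rw [Polynomial.eval_pow]
          _ = S ^ m := by rw [hQeval]
      -- the chain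
      have hSxR : ENNReal.ofReal |S| < R := by
        rw [abs_of_nonneg hS0]
        exact lt_of_le_of_lt (ENNReal.ofReal_le_ofReal hSτ) hτR
      have hLS := hLam S hSxR
      have hLτ := hLam τ (by rwa [abs_of_nonneg hτpos.le])
      have hLSτ : Lam S ≤ Lam τ := by
        refine hasSum_le (fun n => ?_) hLS hLτ
        exact mul_le_mul_of_nonneg_left (pow_le_pow_left₀ hS0 hSτ n) (hnonneg n)
      have hsplit : ∑ n ∈ Finset.range (N+2), PowerSeries.coeff n T * x ^ n =
          x + ∑ n ∈ Finset.range (N+2),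
            (∑ m ∈ Finset.range (n+1), lam m * PowerSeries.coeff n (T ^ m)) * x ^ n := by
        have e1 : ∀ n ∈ Finset.range (N+2), PowerSeries.coeff n T * x ^ n =
            (if n = 1 then x else 0) +
              (∑ m ∈ Finset.range (n+1), lam m * PowerSeries.coeff n (T ^ m)) * x ^ n := by
          intro n _
          rw [hrec n, add_mul]
          congr 1
          split_ifs with h
          · subst h; rw [pow_one, one_mul]
          · rw [zero_mul]
        rw [Finset.sum_congr rfl e1, Finset.sum_add_distrib]
        congr 1
        rw [Finset.sum_ite_eq' (Finset.range (N+2)) 1 (fun _ => x)]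
        simp
      rw [hsplit]
      have hmain : ∑ n ∈ Finset.range (N+2),
          (∑ m ∈ Finset.range (n+1), lam m * PowerSeries.coeff n (T ^ m)) * x ^ n ≤ Lam S := by
        calc ∑ n ∈ Finset.range (N+2),
              (∑ m ∈ Finset.range (n+1), lam m * PowerSeries.coeff n (T ^ m)) * x ^ n
            = ∑ n ∈ Finset.range (N+2), ∑ m ∈ Finset.range (n+1),
                lam m * PowerSeries.coeff n (T ^ m) * x ^ n := by
              apply Finset.sum_congr rfl; intro n _; rw [Finset.sum_mul]
          _ ≤ ∑ n ∈ Finset.range (N+2), ∑ m ∈ Finset.range (N+2),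
                lam m * PowerSeries.coeff n (T ^ m) * x ^ n := by
              apply Finset.sum_le_sum
              intro n hn
              apply Finset.sum_le_sum_of_subset_of_nonneg
              · exact Finset.range_subset_range.2 (by have := Finset.mem_range.1 hn; omega)
              · intro m _ _
                exact mul_nonneg (mul_nonneg (hnonneg m) (htm n m)) (pow_nonneg hx n)
          _ = ∑ m ∈ Finset.range (N+2), ∑ n ∈ Finset.range (N+2),
                lam m * PowerSeries.coeff n (T ^ m) * x ^ n := Finset.sum_comm
          _ ≤ ∑ m ∈ Finset.range (N+2), lam m * S ^ m := by
              apply Finset.sum_le_sum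
              intro m _
              match m with
              | 0 => simp [hlam0]
              | 1 => simp [hlam1]
              | (m+2) =>
                have h2 : ∑ n ∈ Finset.range (N+2),
                    lam (m+2) * PowerSeries.coeff n (T ^ (m+2)) * x ^ n
                    = lam (m+2) * ∑ n ∈ Finset.range (N+2),
                        PowerSeries.coeff n (T ^ (m+2)) * x ^ n := by
                  rw [Finset.mul_sum]
                  apply Finset.sum_congr rfl; intro n _; ring
                rw [h2]
                exact mul_le_mul_of_nonneg_left (hXm (m+2) (by omega)) (hnonneg _)
          _ ≤ Lam S := by
              apply sum_le_hasSum _ _ hLS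
              intro m _
              exact mul_nonneg (hnonneg m) (pow_nonneg hS0 m)
      linarith
  -- summability on [0, ρ]
  have hsum : ∀ x : ℝ, 0 ≤ x → x ≤ ρ → Summable (fun n => PowerSeries.coeff n T * x ^ n) := by
    intro x hx hxρ
    apply summable_of_sum_range_le (fun n => mul_nonneg (htnn n) (pow_nonneg hx n))
    intro n
    match n with
    | 0 => simpa using hτpos.le
    | (N+1) => exact hS x hx hxρ N
  have htsum_le : ∀ x : ℝ, 0 ≤ x → x ≤ ρ →
      (∑' n, PowerSeries.coeff n T * x ^ n) ≤ τ := by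
    intro x hx hxρ
    apply Real.tsum_le_of_sum_range_le (fun n => mul_nonneg (htnn n) (pow_nonneg hx n))
    intro n
    match n with
    | 0 => simpa using hτpos.le
    | (N+1) => exact hS x hx hxρ N
  -- powers of the sum
  have hpowsum : ∀ x : ℝ, 0 ≤ x → Summable (fun n => PowerSeries.coeff n T * x ^ n) →
      ∀ m, HasSum (fun n => PowerSeries.coeff n (T ^ m) * x ^ n)
        ((∑' n, PowerSeries.coeff n T * x ^ n) ^ m) := by
    intro x hx hsx m
    induction m with
    | zero =>
      rw [pow_zero]
      have heq : (fun n : ℕ => PowerSeries.coeff n (1 : PowerSeries ℝ) * x ^ n)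
          = fun n => if n = 0 then (1:ℝ) else 0 := by
        funext n
        rw [PowerSeries.coeff_one]
        match n with
        | 0 => simp
        | (n+1) => simp
      rw [heq]
      exact hasSum_ite_eq 0 1
    | succ m ih =>
      set fx : ℝ := ∑' n, PowerSeries.coeff n T * x ^ n with hfx
      have hfnn : ∀ n, 0 ≤ PowerSeries.coeff n (T ^ m) * x ^ n :=
        fun n => mul_nonneg (htm n m) (pow_nonneg hx n)
      have hgnn : ∀ n, 0 ≤ PowerSeries.coeff n T * x ^ n :=
        fun n => mul_nonneg (htnn n) (pow_nonneg hx n)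
      have hfn : Summable (fun n => ‖PowerSeries.coeff n (T ^ m) * x ^ n‖) := by
        have heq : (fun n => ‖PowerSeries.coeff n (T ^ m) * x ^ n‖)
            = fun n => PowerSeries.coeff n (T ^ m) * x ^ n := by
          funext n; exact Real.norm_of_nonneg (hfnn n)
        rw [heq]; exact ih.summable
      have hgn : Summable (fun n => ‖PowerSeries.coeff n T * x ^ n‖) := by
        have heq : (fun n => ‖PowerSeries.coeff n T * x ^ n‖)
            = fun n => PowerSeries.coeff n T * x ^ n := by
          funext n; exact Real.norm_of_nonneg (hgnn n)
        rw [heq]; exact hsx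
      have hs3 : Summable (fun n => ∑ kl ∈ Finset.HasAntidiagonal.antidiagonal n,
          (PowerSeries.coeff kl.1 (T ^ m) * x ^ kl.1) * (PowerSeries.coeff kl.2 T * x ^ kl.2)) :=
        (summable_norm_sum_mul_antidiagonal_of_summable_norm hfn hgn).of_norm
      have htsum := tsum_mul_tsum_eq_tsum_sum_antidiagonal_of_summable_norm hfn hgn
      have hval : (∑' n, ∑ kl ∈ Finset.HasAntidiagonal.antidiagonal n,
          (PowerSeries.coeff kl.1 (T ^ m) * x ^ kl.1) * (PowerSeries.coeff kl.2 T * x ^ kl.2))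
          = fx ^ (m+1) := by
        rw [← htsum, ih.tsum_eq, ← hfx, pow_succ]
      have heqf : (fun n => PowerSeries.coeff n (T ^ (m+1)) * x ^ n)
          = fun n => ∑ kl ∈ Finset.HasAntidiagonal.antidiagonal n,
            (PowerSeries.coeff kl.1 (T ^ m) * x ^ kl.1) * (PowerSeries.coeff kl.2 T * x ^ kl.2) := by
        funext n
        rw [pow_succ, PowerSeries.coeff_mul, Finset.sum_mul]
        apply Finset.sum_congr rfl
        rintro ⟨i, j⟩ hij
        rw [Finset.HasAntidiagonal.mem_antidiagonal] at hij
        rw [← hij, pow_add]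
        ring
      rw [heqf, ← hval]
      exact hs3.hasSum
  -- the functional equation for the sum
  have hid : ∀ x : ℝ, 0 ≤ x → (hsx : Summable (fun n => PowerSeries.coeff n T * x ^ n)) →
      ENNReal.ofReal (∑' n, PowerSeries.coeff n T * x ^ n) < R →
      (∑' n, PowerSeries.coeff n T * x ^ n)
        = x + Lam (∑' n, PowerSeries.coeff n T * x ^ n) := by
    intro x hx hsx hfR
    set fx : ℝ := ∑' n, PowerSeries.coeff n T * x ^ n with hfx
    have hfx0 : 0 ≤ fx :=
      tsum_nonneg fun n => mul_nonneg (htnn n) (pow_nonneg hx n)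
    have hLf : HasSum (fun m => lam m * fx ^ m) (Lam fx) :=
      hLam fx (by rwa [abs_of_nonneg hfx0])
    have hps := hpowsum x hx hsx
    have hnn : ∀ n m : ℕ, 0 ≤ lam m * (PowerSeries.coeff n (T ^ m) * x ^ n) :=
      fun n m => mul_nonneg (hnonneg m) (mul_nonneg (htm n m) (pow_nonneg hx n))
    have hfinsupp : ∀ n : ℕ, ∀ m ∉ Finset.range (n+1),
        lam m * (PowerSeries.coeff n (T ^ m) * x ^ n) = 0 := by
      intro n m hm
      rw [Finset.mem_range, not_lt] at hm
      rw [hvanish m n (by omega), zero_mul, mul_zero]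
    have hGn : ∀ n, (∑ m ∈ Finset.range (n+1), lam m * PowerSeries.coeff n (T ^ m)) * x ^ n
        = ∑' m : ℕ, lam m * (PowerSeries.coeff n (T ^ m) * x ^ n) := by
      intro n
      rw [tsum_eq_sum (hfinsupp n), Finset.sum_mul]
      apply Finset.sum_congr rfl
      intro m _
      ring
    have hδ : HasSum (fun n : ℕ => (if n = 1 then (1:ℝ) else 0) * x ^ n) x := by
      have heqf : (fun n : ℕ => (if n = 1 then (1:ℝ) else 0) * x ^ n)
          = fun n => if n = 1 then x else 0 := by
        funext n
        split_ifs with h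
        · subst h; rw [pow_one, one_mul]
        · rw [zero_mul]
      rw [heqf]
      exact hasSum_ite_eq 1 x
    have hGsum : HasSum (fun n => ∑' m : ℕ, lam m * (PowerSeries.coeff n (T ^ m) * x ^ n))
        (fx - x) := by
      have h2 : HasSum (fun n => PowerSeries.coeff n T * x ^ n
          - (if n = 1 then (1:ℝ) else 0) * x ^ n) (fx - x) := hsx.hasSum.sub hδ
      have heqf : (fun n => PowerSeries.coeff n T * x ^ n
          - (if n = 1 then (1:ℝ) else 0) * x ^ n)
          = fun n => ∑' m : ℕ, lam m * (PowerSeries.coeff n (T ^ m) * x ^ n) := by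
        funext n
        rw [← hGn n, hrec n, add_mul]
        ring
      rwa [heqf] at h2
    have hsummn : ∀ n, Summable (fun m => lam m * (PowerSeries.coeff n (T ^ m) * x ^ n)) :=
      fun n => summable_of_ne_finset_zero (hfinsupp n)
    have key : fx - x = Lam fx := by
      have lhs1 : ENNReal.ofReal (fx - x)
          = ∑' n : ℕ, ENNReal.ofReal (∑' m : ℕ, lam m * (PowerSeries.coeff n (T ^ m) * x ^ n)) := by
        rw [← hGsum.tsum_eq]
        exact ENNReal.ofReal_tsum_of_nonneg (fun n => tsum_nonneg (hnn n)) hGsum.summable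
      have lhs2 : ∀ n : ℕ, ENNReal.ofReal (∑' m : ℕ, lam m * (PowerSeries.coeff n (T ^ m) * x ^ n))
          = ∑' m : ℕ, ENNReal.ofReal (lam m * (PowerSeries.coeff n (T ^ m) * x ^ n)) :=
        fun n => ENNReal.ofReal_tsum_of_nonneg (hnn n) (hsummn n)
      have rhs1 : ENNReal.ofReal (Lam fx) = ∑' m : ℕ, ENNReal.ofReal (lam m * fx ^ m) := by
        rw [← hLf.tsum_eq]
        exact ENNReal.ofReal_tsum_of_nonneg
          (fun m => mul_nonneg (hnonneg m) (pow_nonneg hfx0 m)) hLf.summable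
      have rhs2 : ∀ m : ℕ, ENNReal.ofReal (lam m * fx ^ m)
          = ∑' n : ℕ, ENNReal.ofReal (lam m * (PowerSeries.coeff n (T ^ m) * x ^ n)) := by
        intro m
        have h3 : HasSum (fun n => lam m * (PowerSeries.coeff n (T ^ m) * x ^ n))
            (lam m * fx ^ m) := (hps m).mul_left (lam m)
        rw [← h3.tsum_eq]
        exact ENNReal.ofReal_tsum_of_nonneg (fun n => hnn n m) h3.summable
      have hswap : (∑' (n : ℕ) (m : ℕ),
            ENNReal.ofReal (lam m * (PowerSeries.coeff n (T ^ m) * x ^ n)))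
          = ∑' (m : ℕ) (n : ℕ),
            ENNReal.ofReal (lam m * (PowerSeries.coeff n (T ^ m) * x ^ n)) :=
        ENNReal.tsum_comm
      have hfinal : ENNReal.ofReal (fx - x) = ENNReal.ofReal (Lam fx) := by
        rw [lhs1]
        simp_rw [lhs2]
        rw [hswap, rhs1]
        simp_rw [rhs2]
      have hfxx : x ≤ fx := by
        have h4 := Summable.le_tsum hsx 1 (fun m _ => mul_nonneg (htnn m) (pow_nonneg hx m))
        rwa [ht1, one_mul, pow_one] at h4
      have hLnn : 0 ≤ Lam fx := by
        rw [← hLf.tsum_eq]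
        exact tsum_nonneg fun m => mul_nonneg (hnonneg m) (pow_nonneg hfx0 m)
      exact (ENNReal.ofReal_eq_ofReal_iff (by linarith) hLnn).1 hfinal
    linarith
  -- value at ρ
  have hsρ := hsum ρ hρpos.le le_rfl
  have htsρ : HasSum (fun n => PowerSeries.coeff n T * ρ ^ n) τ := by
    set fρ : ℝ := ∑' n, PowerSeries.coeff n T * ρ ^ n with hfρdef
    have hfρτ : fρ ≤ τ := htsum_le ρ hρpos.le le_rfl
    have hfρ0 : 0 ≤ fρ :=
      tsum_nonneg fun n => mul_nonneg (htnn n) (pow_nonneg hρpos.le n)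
    have hfρR : ENNReal.ofReal fρ < R := lt_of_le_of_lt (ENNReal.ofReal_le_ofReal hfρτ) hτR
    have hidρ := hid ρ hρpos.le hsρ hfρR
    have hfρτ' : fρ = τ := by
      by_contra hne
      have hlt : fρ < τ := lt_of_le_of_ne hfρτ hne
      obtain ⟨c, hc1, hc2, hceq⟩ := hslope fρ τ hfρ0 hlt hτR
      have hLc : Lam' c < 1 := by
        rw [← hτ1]; exact hstrict c τ (hfρ0.trans hc1.le) hc2 hτR
      have e1 : fρ - Lam fρ = ρ := by rw [← hfρdef] at hidρ; linarith
      rw [hρ] at *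
      nlinarith
    rw [← hfρτ']
    exact hsρ.hasSum
  -- part 2
  have part2 : ∀ x : ℝ, |x| < ρ → Summable fun n => PowerSeries.coeff n T * x ^ n := by
    intro x hxρ
    have h1 : Summable (fun n => PowerSeries.coeff n T * |x| ^ n) :=
      hsum |x| (abs_nonneg x) hxρ.le
    rw [← summable_abs_iff]
    apply h1.congr
    intro n
    rw [abs_mul, abs_pow, abs_of_nonneg (htnn n)]
  -- part 3
  have part3 : ∀ x : ℝ, ρ < |x| → ¬ Summable fun n => PowerSeries.coeff n T * x ^ n := by
    intro x hx hsx
    set y : ℝ := |x| with hydef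
    have hsy : Summable (fun n => PowerSeries.coeff n T * y ^ n) := by
      rw [← summable_abs_iff] at hsx
      apply hsx.congr
      intro n
      rw [abs_mul, abs_pow, abs_of_nonneg (htnn n)]
    set y' : ℝ := (ρ + y) / 2 with hy'def
    have hρy' : ρ < y' := by rw [hy'def]; linarith
    have hy'y : y' < y := by rw [hy'def]; linarith
    have hy'0 : 0 < y' := lt_trans hρpos hρy'
    have hsz : ∀ z : ℝ, 0 ≤ z → z ≤ y' →
        Summable (fun n => PowerSeries.coeff n T * z ^ n) := by
      intro z h1 h2
      apply Summable.of_nonneg_of_le (fun n => mul_nonneg (htnn n) (pow_nonneg h1 n))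
        (fun n => ?_) hsy
      exact mul_le_mul_of_nonneg_left (pow_le_pow_left₀ h1 (by linarith) n) (htnn n)
    set π : ℝ → ℝ := fun z => max 0 (min z y') with hπdef
    have hπcont : Continuous π := continuous_const.max (continuous_id.min continuous_const)
    have hπ0 : ∀ z, 0 ≤ π z := fun z => le_max_left 0 _
    have hπy' : ∀ z, π z ≤ y' := fun z => max_le hy'0.le (min_le_right z y')
    have hπeq : ∀ z : ℝ, 0 ≤ z → z ≤ y' → π z = z := by
      intro z h1 h2
      rw [hπdef]
      simp only [min_eq_left h2, max_eq_right h1]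
    set F : ℝ → ℝ := fun z => ∑' n, PowerSeries.coeff n T * (π z) ^ n with hFdef
    have hFcont : Continuous F := by
      apply continuous_tsum (fun n => continuous_const.mul (hπcont.pow n))
        (hsz y' hy'0.le le_rfl)
      intro n z
      show ‖PowerSeries.coeff n T * (π z) ^ n‖ ≤ _
      rw [Real.norm_eq_abs, abs_mul, abs_pow, abs_of_nonneg (htnn n), abs_of_nonneg (hπ0 z)]
      exact mul_le_mul_of_nonneg_left (pow_le_pow_left₀ (hπ0 z) (hπy' z) n) (htnn n)
    have hFz : ∀ z : ℝ, 0 ≤ z → z ≤ y' → F z = ∑' n, PowerSeries.coeff n T * z ^ n := by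
      intro z h1 h2
      rw [hFdef]
      simp only [hπeq z h1 h2]
    have hFnn : ∀ z : ℝ, 0 ≤ F z := by
      intro z
      exact tsum_nonneg fun n => mul_nonneg (htnn n) (pow_nonneg (hπ0 z) n)
    have hFmono : ∀ a b : ℝ, 0 ≤ a → a ≤ b → b ≤ y' → F a ≤ F b := by
      intro a b h1 h2 h3
      rw [hFz a h1 (h2.trans h3), hFz b (h1.trans h2) h3]
      refine Summable.tsum_le_tsum (fun n => ?_) (hsz a h1 (h2.trans h3)) (hsz b (h1.trans h2) h3)
      exact mul_le_mul_of_nonneg_left (pow_le_pow_left₀ h1 h2 n) (htnn n)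
    have hFρ : F ρ = τ := by
      rw [hFz ρ hρpos.le hρy'.le]
      exact htsρ.tsum_eq
    have hgle : ∀ u : ℝ, 0 ≤ u → ENNReal.ofReal u < R → u - Lam u ≤ ρ := by
      intro u hu huR
      rcases lt_trichotomy u τ with h | h | h
      · obtain ⟨c, hc1, hc2, hceq⟩ := hslope u τ hu h hτR
        have hLc : Lam' c ≤ 1 := by
          rw [← hτ1]; exact hmono c τ (hu.trans hc1.le) hc2.le hτR
        rw [hρ]; nlinarith
      · rw [h, hρ]
      · obtain ⟨c, hc1, hc2, hceq⟩ := hslope τ u hτpos.le h huR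
        have hLc : 1 ≤ Lam' c := by
          rw [← hτ1]
          exact hmono τ c hτpos.le hc1.le
            (lt_of_le_of_lt (ENNReal.ofReal_le_ofReal hc2.le) huR)
        rw [hρ]; nlinarith
    have hidF : ∀ z : ℝ, 0 ≤ z → z ≤ y' → ENNReal.ofReal (F z) < R →
        F z = z + Lam (F z) := by
      intro z h1 h2 h3
      rw [hFz z h1 h2] at h3 ⊢
      exact hid z h1 (hsz z h1 h2) h3
    rcases lt_or_ge (ENNReal.ofReal (F y')) R with hcase | hcase
    · have hFy'eq := hidF y' hy'0.le le_rfl hcase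
      have h6 := hgle (F y') (hFnn y') hcase
      linarith
    · have hRtop : R ≠ ⊤ := by
        intro h
        rw [h, top_le_iff] at hcase
        exact ENNReal.ofReal_ne_top hcase
      set Rr : ℝ := R.toReal with hRrdef
      have hτRr : τ < Rr := (ENNReal.ofReal_lt_iff_lt_toReal hτpos.le hRtop).1 hτR
      set c : ℝ := (τ + Rr) / 2 with hcdef
      have hτc : τ < c := by rw [hcdef]; linarith
      have hcRr : c < Rr := by rw [hcdef]; linarith
      have hcR : ENNReal.ofReal c < R :=
        (ENNReal.ofReal_lt_iff_lt_toReal (by linarith) hRtop).2 hcRr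
      have hFy'c : c ≤ F y' := by
        have h1 : Rr ≤ (ENNReal.ofReal (F y')).toReal := by
          rw [hRrdef]
          exact (ENNReal.toReal_le_toReal hRtop ENNReal.ofReal_ne_top).2 hcase
        rw [ENNReal.toReal_ofReal (hFnn y')] at h1
        linarith
      have hF0 : F 0 = 0 := by
        rw [hFz 0 le_rfl hy'0.le]
        have heq : ∀ n : ℕ, PowerSeries.coeff n T * (0:ℝ) ^ n = 0 := by
          intro n
          match n with
          | 0 => simp [ht0]
          | (n+1) => simp
        rw [tsum_congr heq, tsum_zero]
      have hc01 : c ∈ Set.Icc (F 0) (F y') := by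
        constructor
        · rw [hF0]; linarith
        · exact hFy'c
      obtain ⟨z, hz, hFzc⟩ := intermediate_value_Icc hy'0.le hFcont.continuousOn hc01
      have hzR : ENNReal.ofReal (F z) < R := by rw [hFzc]; exact hcR
      have hidz := hidF z hz.1 hz.2 hzR
      rw [hFzc] at hidz
      have hzρ : z ≤ ρ := by
        have := hgle c (by linarith) hcR
        linarith
      have hFzτ : F z ≤ τ := by
        rw [← hFρ]
        exact hFmono z ρ hz.1 hzρ hρy'.le
      rw [hFzc] at hFzτ
      linarith
  exact ⟨hρpos, part2, part3, htsρ⟩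
end

section
/- (Lemma A.) Let (t_k)_{k≥4} be positive reals with t_k < e/k for all k. Then A(k) := ∑_{j=4}^{k−⌊k^{1/3}⌋−1} j · s_j · t_k^{j−1} = O(1/k³) as k → ∞. In particular this holds for t_k = τ̃_k. -/
open Asymptotics Filter

private lemma exp_mul_pow_le (j : ℕ) (hj : 1 ≤ j) :
    Real.exp 1 * (j : ℝ) ^ (j + 1) ≤ ((j : ℝ) + 1) ^ (j + 1) := by
  have hj0 : (0 : ℝ) < j := by exact_mod_cast hj
  set c : ℝ := (j : ℝ) + 1 with hc
  have hc0 : (0 : ℝ) < c := by positivity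
  have hE : (0 : ℝ) < Real.exp (1 / c) := Real.exp_pos _
  have h1 : (j : ℝ) * Real.exp (1 / c) ≤ c := by
    have h := Real.add_one_le_exp (-(1 / c))
    rw [Real.exp_neg] at h
    have h2 : (-(1 / c) + 1) * Real.exp (1 / c) ≤ 1 := by
      calc (-(1 / c) + 1) * Real.exp (1 / c)
          ≤ (Real.exp (1 / c))⁻¹ * Real.exp (1 / c) :=
            mul_le_mul_of_nonneg_right h hE.le
        _ = 1 := inv_mul_cancel₀ hE.ne'
    have h3 : c * ((-(1 / c) + 1) * Real.exp (1 / c)) ≤ c * 1 :=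
      mul_le_mul_of_nonneg_left h2 hc0.le
    have h4 : c * (-(1 / c) + 1) = (j : ℝ) := by
      field_simp
      rw [hc]; ring
    nlinarith [h3, h4]
  have hexp : Real.exp 1 = Real.exp (1 / c) ^ (j + 1) := by
    rw [← Real.exp_nat_mul]
    congr 1
    push_cast
    field_simp
    exact hc
  calc Real.exp 1 * (j : ℝ) ^ (j + 1)
      = ((j : ℝ) * Real.exp (1 / c)) ^ (j + 1) := by
        rw [mul_pow, hexp]; ring
    _ ≤ c ^ (j + 1) := pow_le_pow_left₀ (by positivity) h1 _

private lemma factorial_exp_le (j : ℕ) (hj : 1 ≤ j) :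
    (j.factorial : ℝ) * Real.exp ((j : ℝ) - 1) ≤ (j : ℝ) ^ (j + 1) := by
  induction j, hj using Nat.le_induction with
  | base => simp [Nat.factorial]
  | succ n hn ih =>
    have hn0 : (0 : ℝ) < n := by exact_mod_cast hn
    have key := exp_mul_pow_le n hn
    have hfac : ((n + 1).factorial : ℝ) = ((n : ℝ) + 1) * n.factorial := by
      rw [Nat.factorial_succ]; push_cast; ring
    push_cast
    calc ((n + 1).factorial : ℝ) * Real.exp ((n : ℝ) + 1 - 1)
        = ((n : ℝ) + 1) * (n.factorial : ℝ) * Real.exp ((n : ℝ) + 1 - 1) := by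
          rw [hfac]
      _ = ((n : ℝ) + 1) * ((n.factorial : ℝ) * Real.exp ((n : ℝ) - 1)) * Real.exp 1 := by
          rw [show (n : ℝ) + 1 - 1 = ((n : ℝ) - 1) + 1 by ring, Real.exp_add]; ring
      _ ≤ ((n : ℝ) + 1) * ((n : ℝ) ^ (n + 1)) * Real.exp 1 := by
          have h2 := mul_le_mul_of_nonneg_left ih (by positivity : (0:ℝ) ≤ (n : ℝ) + 1)
          have h3 : (0:ℝ) < Real.exp 1 := Real.exp_pos 1
          nlinarith [h2, h3]
      _ = ((n : ℝ) + 1) * (Real.exp 1 * (n : ℝ) ^ (n + 1)) := by ring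
      _ ≤ ((n : ℝ) + 1) * (((n : ℝ) + 1) ^ (n + 1)) :=
          mul_le_mul_of_nonneg_left key (by positivity)
      _ = ((n : ℝ) + 1) ^ (n + 1 + 1) := by ring

private lemma factorial_le' (j : ℕ) (hj : 1 ≤ j) :
    (j.factorial : ℝ) ≤ (j : ℝ) ^ (j + 1) * Real.exp (1 - (j : ℝ)) := by
  have h := factorial_exp_le j hj
  have h2 := mul_le_mul_of_nonneg_right h (Real.exp_pos (1 - (j : ℝ))).le
  calc (j.factorial : ℝ)
      = (j.factorial : ℝ) * (Real.exp ((j : ℝ) - 1) * Real.exp (1 - (j : ℝ))) := by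
        rw [← Real.exp_add, show (j:ℝ) - 1 + (1 - (j:ℝ)) = 0 by ring, Real.exp_zero, mul_one]
    _ = (j.factorial : ℝ) * Real.exp ((j : ℝ) - 1) * Real.exp (1 - (j : ℝ)) := by ring
    _ ≤ (j : ℝ) ^ (j + 1) * Real.exp (1 - (j : ℝ)) := h2

private lemma pow6_le (j : ℕ) (hj : 4 ≤ j) : ((j : ℝ)) ^ 6 ≤ 16 * 4 ^ j := by
  induction j, hj using Nat.le_induction with
  | base => norm_num
  | succ n hn ih =>
    have hn0 : (4 : ℝ) ≤ n := by exact_mod_cast hn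
    have h1 : (n : ℝ) + 1 ≤ 5 / 4 * n := by linarith
    have h2 : ((n : ℝ) + 1) ^ 6 ≤ (5 / 4 * n) ^ 6 :=
      pow_le_pow_left₀ (by positivity) h1 6
    have h3 : (5 / 4 * (n:ℝ)) ^ 6 = (5/4 : ℝ)^6 * (n:ℝ)^6 := by ring
    push_cast
    calc ((n : ℝ) + 1) ^ 6 ≤ (5/4 : ℝ)^6 * (n:ℝ)^6 := by rw [← h3]; exact h2
      _ ≤ 4 * (n : ℝ)^6 := by nlinarith [pow_nonneg (by linarith : (0:ℝ) ≤ (n:ℝ)) 6]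
      _ ≤ 4 * (16 * 4 ^ n) := by linarith
      _ = 16 * 4 ^ (n + 1) := by ring

private lemma branchB (a : ℕ) (t K : ℝ) (ht0 : 0 < t) (hK0 : 0 < K)
    (htK : t ≤ Real.exp 1 / K) (h8 : 8 * ((a : ℝ) + 4) ≤ K) :
    ((a : ℝ) + 4) * (((a + 4).factorial : ℝ)) * t ^ (a + 3) ≤
      65536 * Real.exp (-3) * t ^ 3 * ((1 : ℝ) / 2) ^ (a + 4) := by
  set J : ℝ := (a : ℝ) + 4 with hJ
  have hJ0 : (0 : ℝ) < J := by positivity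
  have htJ : t ≤ Real.exp 1 / (8 * J) := by
    refine le_trans htK ?_
    gcongr
  have hta : t ^ a ≤ (Real.exp 1 / (8 * J)) ^ a := pow_le_pow_left₀ ht0.le htJ a
  have hfac : (((a + 4).factorial : ℝ)) ≤ J ^ (a + 5) * Real.exp (1 - J) := by
    have h := factorial_le' (a + 4) (by omega)
    push_cast at h
    exact h
  have e1 : (Real.exp 1 / (8 * J)) ^ a = Real.exp (a : ℝ) / ((8 * J) ^ a) := by
    rw [div_pow, ← Real.exp_nat_mul, mul_one]
  have e2 : Real.exp (1 - J) * Real.exp (a : ℝ) = Real.exp (-3) := by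
    rw [← Real.exp_add]; congr 1; rw [hJ]; ring
  have e3 : J ^ (a + 6) / (8 * J) ^ a = J ^ 6 * ((1 : ℝ) / 8) ^ a := by
    have hJa : (J : ℝ) ^ a ≠ 0 := by positivity
    have h8a : ((8 : ℝ)) ^ a ≠ 0 := by positivity
    rw [mul_pow, pow_add]
    field_simp
    ring
    rw [← mul_pow]; norm_num
  have h6 : J ^ 6 ≤ 16 * 4 ^ (a + 4) := by
    have h := pow6_le (a + 4) (by omega)
    push_cast at h
    exact h
  calc J * ((a + 4).factorial : ℝ) * t ^ (a + 3)
      = J * ((a + 4).factorial : ℝ) * t ^ a * t ^ 3 := by rw [pow_add]; ring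
    _ ≤ J * (J ^ (a + 5) * Real.exp (1 - J)) * (Real.exp 1 / (8 * J)) ^ a * t ^ 3 := by
        gcongr
    _ = (J ^ (a + 6) / (8 * J) ^ a) * Real.exp (-3) * t ^ 3 := by
        rw [e1, ← e2, pow_add, pow_add]
        field_simp
    _ = J ^ 6 * ((1 : ℝ) / 8) ^ a * Real.exp (-3) * t ^ 3 := by rw [e3]
    _ ≤ (16 * 4 ^ (a + 4)) * ((1 : ℝ) / 8) ^ a * Real.exp (-3) * t ^ 3 := by
        gcongr
    _ = 65536 * Real.exp (-3) * t ^ 3 * ((1 : ℝ) / 2) ^ (a + 4) := by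
        have h48 : (4 : ℝ) ^ a * ((1 : ℝ) / 8) ^ a = ((1 : ℝ) / 2) ^ a := by
          rw [← mul_pow]; norm_num
        rw [show (4 : ℝ) ^ (a + 4) = 4 ^ a * 256 by rw [pow_add]; norm_num,
            show ((1 : ℝ) / 2) ^ (a + 4) = (1 / 2 : ℝ) ^ a * (1 / 16) by rw [pow_add]; norm_num,
            ← h48]
        ring

private lemma branchA (b : ℕ) (t K x : ℝ) (hb : 3 ≤ b) (ht0 : 0 < t)
    (hK16 : 16 ≤ K) (htK : t ≤ Real.exp 1 / K) (hx0 : 0 ≤ x)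
    (hjK : ((b : ℝ) + 1) ≤ K - x) (h8 : K ≤ 8 * ((b : ℝ) + 1)) :
    ((b : ℝ) + 1) * (((b + 1).factorial : ℝ)) * t ^ b ≤ K ^ 3 * Real.exp (-(x / 16)) := by
  set J : ℝ := (b : ℝ) + 1 with hJ
  have hJ0 : (0 : ℝ) < J := by positivity
  have hK0 : (0 : ℝ) < K := by linarith
  have hJK : J ≤ K := by linarith
  have hxK : x ≤ K := by
    have : (4 : ℝ) ≤ J := by
      rw [hJ]; have : (3 : ℝ) ≤ (b : ℝ) := by exact_mod_cast hb
      linarith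
    linarith
  have hta : t ^ b ≤ (Real.exp 1 / K) ^ b := pow_le_pow_left₀ ht0.le htK b
  have hfac : (((b + 1).factorial : ℝ)) ≤ J ^ (b + 2) * Real.exp (1 - J) := by
    have h := factorial_le' (b + 1) (by omega)
    push_cast at h
    exact h
  have e1 : (Real.exp 1 / K) ^ b = Real.exp (b : ℝ) / K ^ b := by
    rw [div_pow, ← Real.exp_nat_mul, mul_one]
  have e2 : Real.exp (1 - J) * Real.exp (b : ℝ) = 1 := by
    rw [← Real.exp_add, show 1 - J + (b : ℝ) = 0 by rw [hJ]; ring, Real.exp_zero]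
  have hr0 : (0 : ℝ) ≤ 1 - x / K := by
    rw [sub_nonneg, div_le_one hK0]; exact hxK
  have hexpb : Real.exp (-(x / K)) ^ b = Real.exp (-((b : ℝ) * (x / K))) := by
    rw [← Real.exp_nat_mul]; congr 1; ring
  have hbK : K / 16 ≤ (b : ℝ) := by
    have : (3:ℝ) ≤ (b:ℝ) := by exact_mod_cast hb
    rw [hJ] at h8
    linarith
  calc J * ((b + 1).factorial : ℝ) * t ^ b
      ≤ J * (J ^ (b + 2) * Real.exp (1 - J)) * (Real.exp 1 / K) ^ b := by
        gcongr
    _ = J ^ 3 * (J ^ b / K ^ b) * (Real.exp (1 - J) * Real.exp (b : ℝ)) := by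
        rw [e1, pow_add]
        field_simp
    _ = J ^ 3 * (J / K) ^ b := by rw [e2, mul_one, div_pow]
    _ ≤ K ^ 3 * (1 - x / K) ^ b := by
        have h1 : J / K ≤ 1 - x / K := by
          rw [div_le_iff₀ hK0]
          have : (1 - x / K) * K = K - x := by field_simp
          rw [this]; exact hjK
        have h2 : (J / K) ^ b ≤ (1 - x / K) ^ b :=
          pow_le_pow_left₀ (by positivity) h1 b
        have h3 : J ^ 3 ≤ K ^ 3 := pow_le_pow_left₀ hJ0.le hJK 3
        have h4 : (0:ℝ) ≤ (J / K) ^ b := by positivity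
        exact mul_le_mul h3 h2 h4 (by positivity)
    _ ≤ K ^ 3 * Real.exp (-(x / K)) ^ b := by
        have h5 : (1 - x / K) ^ b ≤ Real.exp (-(x / K)) ^ b := by
          refine pow_le_pow_left₀ hr0 ?_ b
          have := Real.add_one_le_exp (-(x / K))
          linarith
        exact mul_le_mul_of_nonneg_left h5 (by positivity)
    _ = K ^ 3 * Real.exp (-((b : ℝ) * (x / K))) := by rw [hexpb]
    _ ≤ K ^ 3 * Real.exp (-(x / 16)) := by
        gcongr
        calc x / 16 = (K / 16) * (x / K) := by field_simp
          _ ≤ (b : ℝ) * (x / K) := by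
              have : (0:ℝ) ≤ x / K := by positivity
              nlinarith

theorem stmt14 (s : ℕ → ℝ)
    (hs_lb : ∀ j : ℕ, 4 ≤ j →
      ((j.factorial : ℝ) / Real.exp 2) * (1 - 4 / (j : ℝ)) ≤ s j)
    (hs_ub : ∀ j : ℕ, 4 ≤ j →
      s j ≤ ((j.factorial : ℝ) / Real.exp 2) *
        (1 - 4 / (j : ℝ) + 2 / ((j : ℝ) * ((j : ℝ) - 1))))
    (t : ℕ → ℝ)
    (ht : ∀ k : ℕ, 4 ≤ k → 0 < t k ∧ t k < Real.exp 1 / k) :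
    (fun k : ℕ =>
        ∑ j ∈ Finset.Icc 4 (k - ⌊(k : ℝ) ^ ((1 : ℝ) / 3)⌋₊ - 1),
          (j : ℝ) * s j * t k ^ (j - 1))
      =O[atTop] fun k : ℕ => 1 / (k : ℝ) ^ 3 := by
  -- basic facts about s
  have hs0 : ∀ j : ℕ, 4 ≤ j → 0 ≤ s j := by
    intro j hj
    refine le_trans ?_ (hs_lb j hj)
    have hj4 : (4 : ℝ) ≤ (j : ℝ) := by exact_mod_cast hj
    have h1 : (0:ℝ) ≤ 1 - 4 / (j : ℝ) := by
      have : 4 / (j : ℝ) ≤ 1 := by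
        rw [div_le_one (by linarith)]; exact hj4
      linarith
    exact mul_nonneg (by positivity) h1
  have hsfac : ∀ j : ℕ, 4 ≤ j → s j ≤ (j.factorial : ℝ) := by
    intro j hj
    have hj4 : (4 : ℝ) ≤ (j : ℝ) := by exact_mod_cast hj
    refine le_trans (hs_ub j hj) ?_
    have h1 : 1 - 4 / (j : ℝ) + 2 / ((j : ℝ) * ((j : ℝ) - 1)) ≤ 1 := by
      have h2 : 2 / ((j : ℝ) * ((j : ℝ) - 1)) ≤ 4 / (j : ℝ) := by
        rw [div_le_div_iff₀ (by nlinarith) (by linarith)]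
        nlinarith
      linarith
    calc ((j.factorial : ℝ) / Real.exp 2) * (1 - 4 / (j : ℝ) + 2 / ((j : ℝ) * ((j : ℝ) - 1)))
        ≤ ((j.factorial : ℝ) / Real.exp 2) * 1 := by
          refine mul_le_mul_of_nonneg_left h1 ?_
          positivity
      _ = (j.factorial : ℝ) / Real.exp 2 := mul_one _
      _ ≤ (j.factorial : ℝ) := by
          refine div_le_self (by positivity) ?_
          have := Real.one_le_exp (by norm_num : (0:ℝ) ≤ 2)
          linarith
  rw [isBigO_iff]
  refine ⟨131072 + (Nat.factorial 21 : ℝ) * 16 ^ 21, ?_⟩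
  filter_upwards [eventually_ge_atTop 16] with k hk16
  set K : ℝ := (k : ℝ) with hKdef
  have hK16 : (16 : ℝ) ≤ K := by rw [hKdef]; exact_mod_cast hk16
  have hK0 : (0 : ℝ) < K := by linarith
  obtain ⟨ht0, ht1⟩ := ht k (by omega)
  have htle : t k ≤ Real.exp 1 / K := ht1.le
  set x : ℝ := K ^ ((1 : ℝ) / 3) with hxdef
  have hx0 : 0 < x := Real.rpow_pos_of_pos hK0 _
  have hx3 : x ^ (3 : ℕ) = K := by
    rw [hxdef, ← Real.rpow_natCast (K ^ ((1 : ℝ) / 3)) 3, ← Real.rpow_mul hK0.le]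
    norm_num
  have hx2 : 2 ≤ x := by nlinarith [hx0.le, hx3, hK16, sq_nonneg x]
  have hxK : 2 * x ≤ K := by
    nlinarith [hx3, hx2, mul_le_mul hx2 hx2 (by norm_num : (0:ℝ) ≤ 2) (by linarith : (0:ℝ) ≤ x)]
  set m : ℕ := k - ⌊x⌋₊ - 1 with hmdef
  have hfl : (⌊x⌋₊ : ℝ) ≤ x := Nat.floor_le hx0.le
  have hflk : ⌊x⌋₊ + 1 ≤ k := by
    have h1 : (⌊x⌋₊ : ℝ) < K := by linarith
    rw [hKdef] at h1
    have h2 : ⌊x⌋₊ < k := by exact_mod_cast h1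
    omega
  have hmK : (m : ℝ) ≤ K - x := by
    have h0 : k - ⌊x⌋₊ - 1 = k - (⌊x⌋₊ + 1) := by omega
    have h1 : ((k - ⌊x⌋₊ - 1 : ℕ) : ℝ) = K - (⌊x⌋₊ : ℝ) - 1 := by
      rw [h0, Nat.cast_sub hflk]; push_cast; ring
    rw [hmdef, h1]
    have := Nat.lt_floor_add_one x
    linarith
  have hmk : m ≤ k := by omega
  set E : ℝ := Real.exp (-(x / 16)) with hEdef
  have hE0 : (0 : ℝ) ≤ E := (Real.exp_pos _).le
  -- pointwise bound
  have hterm : ∀ j ∈ Finset.Icc 4 m, (j : ℝ) * s j * t k ^ (j - 1) ≤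
      65536 * Real.exp (-3) * t k ^ 3 * ((1 : ℝ) / 2) ^ j + K ^ 3 * E := by
    intro j hj
    rw [Finset.mem_Icc] at hj
    obtain ⟨hj4, hjm⟩ := hj
    have hstep : (j : ℝ) * s j * t k ^ (j - 1) ≤ (j : ℝ) * (j.factorial : ℝ) * t k ^ (j - 1) := by
      refine mul_le_mul_of_nonneg_right (mul_le_mul_of_nonneg_left (hsfac j hj4) ?_) ?_
      · positivity
      · positivity
    refine le_trans hstep ?_
    by_cases h8 : 8 * j ≤ k
    · obtain ⟨a, rfl⟩ : ∃ a, j = a + 4 := ⟨j - 4, by omega⟩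
      have hj8K : 8 * ((a : ℝ) + 4) ≤ K := by
        have h' : ((8 * (a + 4) : ℕ) : ℝ) ≤ ((k : ℕ) : ℝ) := Nat.cast_le.mpr h8
        push_cast at h'
        rw [hKdef]
        linarith
      have hb := branchB a (t k) K ht0 hK0 htle hj8K
      have hcast : ((a + 4 : ℕ) : ℝ) = (a : ℝ) + 4 := by push_cast; ring
      have hexp : (a + 4) - 1 = a + 3 := rfl
      rw [hcast, hexp]
      refine le_trans hb ?_
      exact le_add_of_nonneg_right (by positivity)
    · have hkj : k < 8 * j := by omega
      obtain ⟨b, rfl⟩ : ∃ b, j = b + 1 := ⟨j - 1, by omega⟩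
      have hb3 : 3 ≤ b := by omega
      have hjK : ((b : ℝ) + 1) ≤ K - x := by
        have h1 : ((b + 1 : ℕ) : ℝ) ≤ (m : ℝ) := by exact_mod_cast hjm
        push_cast at h1
        linarith
      have h8' : K ≤ 8 * ((b : ℝ) + 1) := by
        have h' : ((k : ℕ) : ℝ) ≤ ((8 * (b + 1) : ℕ) : ℝ) := Nat.cast_le.mpr hkj.le
        push_cast at h'
        rw [hKdef]
        linarith
      have hb := branchA b (t k) K x hb3 ht0 hK16 htle hx0.le hjK h8'
      have hcast : ((b + 1 : ℕ) : ℝ) = (b : ℝ) + 1 := by push_cast; ring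
      have hexp : (b + 1) - 1 = b := rfl
      rw [hcast, hexp]
      refine le_trans hb ?_
      exact le_add_of_nonneg_left (by positivity)
  -- summing
  have hsum1 : ∑ j ∈ Finset.Icc 4 m, (j : ℝ) * s j * t k ^ (j - 1) ≤
      ∑ j ∈ Finset.Icc 4 m, (65536 * Real.exp (-3) * t k ^ 3 * ((1 : ℝ) / 2) ^ j + K ^ 3 * E) :=
    Finset.sum_le_sum hterm
  have hgeom : ∑ j ∈ Finset.Icc 4 m, ((1 : ℝ) / 2) ^ j ≤ 2 := by
    calc ∑ j ∈ Finset.Icc 4 m, ((1 : ℝ) / 2) ^ j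
        ≤ ∑ j ∈ Finset.range (m + 1), ((1 : ℝ) / 2) ^ j := by
          refine Finset.sum_le_sum_of_subset_of_nonneg ?_ (fun _ _ _ => by positivity)
          intro j hj
          rw [Finset.mem_Icc] at hj
          rw [Finset.mem_range]
          omega
      _ ≤ 2 := sum_geometric_two_le _
  have hcard : (((Finset.Icc 4 m).card : ℕ) : ℝ) ≤ K := by
    have h1 : (Finset.Icc 4 m).card ≤ k := by
      rw [Nat.card_Icc]; omega
    rw [hKdef]
    exact_mod_cast h1
  have hsum2 : ∑ j ∈ Finset.Icc 4 m, (65536 * Real.exp (-3) * t k ^ 3 * ((1 : ℝ) / 2) ^ j + K ^ 3 * E)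
      = 65536 * Real.exp (-3) * t k ^ 3 * (∑ j ∈ Finset.Icc 4 m, ((1 : ℝ) / 2) ^ j)
        + ((Finset.Icc 4 m).card : ℝ) * (K ^ 3 * E) := by
    rw [Finset.sum_add_distrib, Finset.sum_const, ← Finset.mul_sum, nsmul_eq_mul]
  -- first part
  have hpart1 : 65536 * Real.exp (-3) * t k ^ 3 * (∑ j ∈ Finset.Icc 4 m, ((1 : ℝ) / 2) ^ j)
      ≤ 131072 / K ^ 3 := by
    have ht3 : t k ^ 3 ≤ (Real.exp 1 / K) ^ 3 := pow_le_pow_left₀ ht0.le htle 3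
    have he3 : Real.exp (-3) * Real.exp 1 ^ 3 = 1 := by
      rw [← Real.exp_nat_mul, ← Real.exp_add]
      norm_num
    calc 65536 * Real.exp (-3) * t k ^ 3 * (∑ j ∈ Finset.Icc 4 m, ((1 : ℝ) / 2) ^ j)
        ≤ 65536 * Real.exp (-3) * (Real.exp 1 / K) ^ 3 * 2 := by
          have hc : (0:ℝ) ≤ 65536 * Real.exp (-3) := by positivity
          have h1 : (0:ℝ) ≤ ∑ j ∈ Finset.Icc 4 m, ((1 : ℝ) / 2) ^ j :=
            Finset.sum_nonneg (fun _ _ => by positivity)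
          exact mul_le_mul (mul_le_mul_of_nonneg_left ht3 hc) hgeom h1
            (by positivity)
      _ = 131072 * (Real.exp (-3) * Real.exp 1 ^ 3) / K ^ 3 := by
          rw [div_pow]; ring
      _ = 131072 / K ^ 3 := by rw [he3]; ring
  -- second part
  have hx21 : x ^ (21 : ℕ) = K ^ (7 : ℕ) := by
    rw [hxdef, ← Real.rpow_natCast (K ^ ((1 : ℝ) / 3)) 21, ← Real.rpow_mul hK0.le,
      show ((1 : ℝ) / 3) * ((21 : ℕ) : ℝ) = ((7 : ℕ) : ℝ) by push_cast; norm_num,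
      Real.rpow_natCast]
  have hEbound : E ≤ (Nat.factorial 21 : ℝ) * 16 ^ 21 / K ^ 7 := by
    have hx16 : (0:ℝ) ≤ x / 16 := by positivity
    have h1 : (x / 16) ^ 21 / (Nat.factorial 21 : ℝ) ≤ Real.exp (x / 16) :=
      Real.pow_div_factorial_le_exp (x / 16) hx16 21
    have h2 : (x / 16) ^ 21 = K ^ 7 / 16 ^ 21 := by
      rw [div_pow, hx21]
    have h3 : K ^ 7 ≤ (Nat.factorial 21 : ℝ) * 16 ^ 21 * Real.exp (x / 16) := by
      rw [h2] at h1
      have hf : (0:ℝ) < (Nat.factorial 21 : ℝ) := by positivity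
      rw [div_div, div_le_iff₀ (by positivity)] at h1
      calc K ^ 7 ≤ Real.exp (x / 16) * (16 ^ 21 * (Nat.factorial 21 : ℝ)) := h1
        _ = (Nat.factorial 21 : ℝ) * 16 ^ 21 * Real.exp (x / 16) := by ring
    rw [hEdef, Real.exp_neg, le_div_iff₀ (by positivity)]
    rw [inv_mul_eq_div, div_le_iff₀ (Real.exp_pos _)]
    calc K ^ 7 ≤ (Nat.factorial 21 : ℝ) * 16 ^ 21 * Real.exp (x / 16) := h3
      _ = (Nat.factorial 21 : ℝ) * 16 ^ 21 * Real.exp (x / 16) := rfl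
  have hpart2 : ((Finset.Icc 4 m).card : ℝ) * (K ^ 3 * E)
      ≤ (Nat.factorial 21 : ℝ) * 16 ^ 21 / K ^ 3 := by
    calc ((Finset.Icc 4 m).card : ℝ) * (K ^ 3 * E)
        ≤ K * (K ^ 3 * ((Nat.factorial 21 : ℝ) * 16 ^ 21 / K ^ 7)) := by
          have hc0 : (0:ℝ) ≤ ((Finset.Icc 4 m).card : ℝ) := by positivity
          refine mul_le_mul hcard ?_ (by positivity) hK0.le
          exact mul_le_mul_of_nonneg_left hEbound (by positivity)
      _ = (Nat.factorial 21 : ℝ) * 16 ^ 21 / K ^ 3 := by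
          field_simp
  -- conclude
  have hS0 : (0 : ℝ) ≤ ∑ j ∈ Finset.Icc 4 m, (j : ℝ) * s j * t k ^ (j - 1) := by
    refine Finset.sum_nonneg ?_
    intro j hj
    rw [Finset.mem_Icc] at hj
    have := hs0 j hj.1
    positivity
  have hfinal : ∑ j ∈ Finset.Icc 4 m, (j : ℝ) * s j * t k ^ (j - 1)
      ≤ (131072 + (Nat.factorial 21 : ℝ) * 16 ^ 21) * (1 / K ^ 3) := by
    calc ∑ j ∈ Finset.Icc 4 m, (j : ℝ) * s j * t k ^ (j - 1)
        ≤ 65536 * Real.exp (-3) * t k ^ 3 * (∑ j ∈ Finset.Icc 4 m, ((1 : ℝ) / 2) ^ j)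
            + ((Finset.Icc 4 m).card : ℝ) * (K ^ 3 * E) := by
          rw [← hsum2]; exact hsum1
      _ ≤ 131072 / K ^ 3 + (Nat.factorial 21 : ℝ) * 16 ^ 21 / K ^ 3 := by
          exact add_le_add hpart1 hpart2
      _ = (131072 + (Nat.factorial 21 : ℝ) * 16 ^ 21) * (1 / K ^ 3) := by ring
  have hB0 : (0:ℝ) ≤ 1 / K ^ 3 := le_of_lt (div_pos one_pos (pow_pos hK0 3))
  rw [Real.norm_eq_abs, Real.norm_eq_abs, abs_of_nonneg hS0, abs_of_nonneg hB0]
  exact hfinal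
end

section
/- (Lemma B.) Let (t_k)_{k≥5} be positive reals with t_k ≤ (e/k)·(e³/(√(2π) k^{3/2}(k−4)))^{1/(k−1)} for all large k. Then limsup_{k→∞} ∑_{j=k−⌊k^{1/3}⌋}^{k−1} j · s_j · t_k^{j−1} ≤ 1/(e−1). In particular, with t_k = τ̃_k, the quantity B(k) = ∑_{j=k−⌊k^{1/3}⌋}^{k−1} j s_j τ̃_k^{j−1} is at most (1 + o(1))/(e−1). -/
open Filter Topology

noncomputable def mB (k : ℕ) : ℕ := ⌊(k : ℝ) ^ ((1 : ℝ) / 3)⌋₊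

noncomputable def CB (k : ℕ) : ℝ :=
  Real.exp 3 / (Real.sqrt (2 * Real.pi) * (k : ℝ) ^ ((3 : ℝ) / 2) * ((k : ℝ) - 4))

noncomputable def GB (k : ℕ) : ℝ :=
  Stirling.stirlingSeq (k - mB k) / Real.sqrt Real.pi
    * Real.exp ((mB k : ℝ) ^ 2 / k)
    * (CB k)⁻¹ ^ ((mB k : ℝ) / ((k : ℝ) - 1))
    * ((k : ℝ) / ((k : ℝ) - 4))

noncomputable def gB (k : ℕ) : ℝ := GB k * (1 / (Real.exp 1 - 1))

lemma mB_le (k : ℕ) : (mB k : ℝ) ≤ (k : ℝ) ^ ((1 : ℝ) / 3) :=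
  Nat.floor_le (Real.rpow_nonneg (Nat.cast_nonneg k) _)

lemma cbrt_le_half {k : ℕ} (hk : 8 ≤ k) : (k : ℝ) ^ ((1 : ℝ) / 3) ≤ (k : ℝ) / 2 := by
  have hk' : (8 : ℝ) ≤ (k : ℝ) := by exact_mod_cast hk
  have h64 : (64:ℝ) ≤ (k:ℝ)^2 := by nlinarith
  have h1 : (k : ℝ) ≤ ((k : ℝ) / 2) ^ (3 : ℕ) := by nlinarith
  have h2 : ((k : ℝ)) ^ ((1 : ℝ) / 3) ≤ (((k : ℝ) / 2) ^ (3 : ℕ)) ^ ((1 : ℝ) / 3) :=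
    Real.rpow_le_rpow (by positivity) h1 (by norm_num)
  calc (k : ℝ) ^ ((1 : ℝ) / 3) ≤ (((k : ℝ) / 2) ^ (3 : ℕ)) ^ ((1 : ℝ) / 3) := h2
    _ = (k : ℝ) / 2 := by
        rw [← Real.rpow_natCast ((k : ℝ) / 2) 3, ← Real.rpow_mul (by positivity)]
        norm_num

lemma mB_add_le {k b : ℕ} (hk8 : 8 ≤ k) (hkb : 2 * b ≤ k) : mB k + b ≤ k := by
  have h1 : (mB k : ℝ) ≤ (k : ℝ) / 2 := (mB_le k).trans (cbrt_le_half hk8)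
  have h2 : (b : ℝ) ≤ (k : ℝ) / 2 := by
    have : (2 * b : ℝ) ≤ (k : ℝ) := by exact_mod_cast hkb
    linarith
  have : (mB k : ℝ) + (b : ℝ) ≤ (k : ℝ) := by linarith
  exact_mod_cast this

lemma tendsto_k_sub_mB : Tendsto (fun k : ℕ => k - mB k) atTop atTop := by
  rw [tendsto_atTop]
  intro b
  filter_upwards [eventually_ge_atTop (max 8 (2 * b))] with k hk
  have h := mB_add_le (k := k) (b := b) (le_trans (le_max_left _ _) hk)
    (le_trans (le_max_right _ _) hk)
  omega


lemma sum_Icc_reindex (k mm : ℕ) (h : mm + 1 ≤ k) (f : ℕ → ℝ) :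
    ∑ j ∈ Finset.Icc (k - mm) (k - 1), f j = ∑ i ∈ Finset.Icc 1 mm, f (k - i) := by
  refine Finset.sum_nbij' (fun j => k - j) (fun i => k - i) ?_ ?_ ?_ ?_ ?_
  all_goals simp only [Finset.mem_Icc]
  all_goals intros
  case _ => omega
  case _ => omega
  case _ => omega
  case _ => omega
  case _ => rename_i a ha; rw [show k - (k - a) = a by omega]

lemma geom_tail_le (mm : ℕ) :
    ∑ i ∈ Finset.Icc 1 mm, Real.exp (-(i : ℝ)) ≤ 1 / (Real.exp 1 - 1) := by
  have hr0 : (0 : ℝ) ≤ Real.exp (-1) := (Real.exp_pos _).le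
  have hr1 : Real.exp (-1 : ℝ) < 1 := by
    rw [Real.exp_lt_one_iff]; norm_num
  have he1 : (1 : ℝ) < Real.exp 1 := by
    have := Real.add_one_le_exp (1 : ℝ); linarith
  have hsum : ∑ i ∈ Finset.Icc 1 mm, Real.exp (-(i : ℝ))
      = Real.exp (-1) * ∑ i ∈ Finset.range mm, Real.exp (-1 : ℝ) ^ i := by
    rw [Finset.mul_sum]
    rw [show Finset.Icc 1 mm = Finset.Ico 1 (mm + 1) by rfl, Finset.sum_Ico_eq_sum_range]
    simp only [Nat.add_sub_cancel]
    refine Finset.sum_congr rfl fun i _ => ?_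
    rw [← Real.exp_nat_mul, ← Real.exp_add]
    push_cast
    ring_nf
  rw [hsum]
  have hgeo : ∑ i ∈ Finset.range mm, Real.exp (-1 : ℝ) ^ i ≤ (1 - Real.exp (-1))⁻¹ := by
    have := sum_le_hasSum (Finset.range mm)
      (fun i _ => pow_nonneg hr0 i) (hasSum_geometric_of_lt_one hr0 hr1)
    simpa using this
  have h1 : Real.exp (-1) * ∑ i ∈ Finset.range mm, Real.exp (-1 : ℝ) ^ i
      ≤ Real.exp (-1) * (1 - Real.exp (-1))⁻¹ :=
    mul_le_mul_of_nonneg_left hgeo hr0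
  refine h1.trans (le_of_eq ?_)
  rw [Real.exp_neg]
  have hee : Real.exp 1 ≠ 0 := (Real.exp_pos 1).ne'
  field_simp


lemma exp3_lt : Real.exp 3 < 21 := by
  have h1 : Real.exp 3 = Real.exp 1 ^ (3:ℕ) := by
    rw [← Real.exp_nat_mul]; norm_num
  have := Real.exp_one_lt_d9
  rw [h1]
  calc Real.exp 1 ^ (3:ℕ) < 2.7182818286 ^ (3:ℕ) :=
        pow_lt_pow_left₀ this (Real.exp_pos 1).le (by norm_num)
    _ < 21 := by norm_num

lemma sqrt_two_pi_ge_one : (1:ℝ) ≤ Real.sqrt (2 * Real.pi) := by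
  rw [show (1:ℝ) = Real.sqrt 1 by rw [Real.sqrt_one]]
  apply Real.sqrt_le_sqrt
  nlinarith [Real.pi_gt_three]

lemma sqrt_two_pi_le_exp3 : Real.sqrt (2 * Real.pi) ≤ Real.exp 3 := by
  have h9 : Real.sqrt (2 * Real.pi) ≤ Real.sqrt 9 := by
    apply Real.sqrt_le_sqrt; nlinarith [Real.pi_le_four]
  have h3 : Real.sqrt 9 = 3 := by
    rw [show (9:ℝ) = 3 ^ 2 by norm_num, Real.sqrt_sq (by norm_num : (0:ℝ) ≤ 3)]
  have := Real.add_one_le_exp (3:ℝ)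
  linarith

lemma CB_pos {k : ℕ} (hk : 5 ≤ k) : 0 < CB k := by
  have hk' : (5:ℝ) ≤ (k:ℝ) := by exact_mod_cast hk
  have h1 : (0:ℝ) < Real.sqrt (2 * Real.pi) := by
    have := sqrt_two_pi_ge_one; linarith
  have h2 : (0:ℝ) < (k : ℝ) ^ ((3 : ℝ) / 2) := Real.rpow_pos_of_pos (by linarith) _
  have h3 : (0:ℝ) < (k:ℝ) - 4 := by linarith
  unfold CB; positivity

lemma CB_le_one {k : ℕ} (hk : 25 ≤ k) : CB k ≤ 1 := by
  have hk' : (25:ℝ) ≤ (k:ℝ) := by exact_mod_cast hk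
  have h1 : (1:ℝ) ≤ Real.sqrt (2 * Real.pi) := sqrt_two_pi_ge_one
  have h2 : (1:ℝ) ≤ (k : ℝ) ^ ((3 : ℝ) / 2) :=
    Real.one_le_rpow (by linarith) (by norm_num)
  have h3 : (21:ℝ) ≤ (k:ℝ) - 4 := by linarith
  have hd : (21:ℝ) ≤ Real.sqrt (2 * Real.pi) * (k : ℝ) ^ ((3 : ℝ) / 2) * ((k : ℝ) - 4) := by
    have h12 : (1:ℝ) * 1 ≤ Real.sqrt (2 * Real.pi) * (k : ℝ) ^ ((3 : ℝ) / 2) :=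
      mul_le_mul h1 h2 (by norm_num) (by positivity)
    have := mul_le_mul h12 h3 (by norm_num) (by positivity)
    simpa using this
  rw [CB, div_le_one (by linarith)]
  linarith [exp3_lt]

lemma CB_inv_le {k : ℕ} (hk : 5 ≤ k) : (CB k)⁻¹ ≤ (k:ℝ) ^ ((5:ℝ)/2) := by
  have hk' : (5:ℝ) ≤ (k:ℝ) := by exact_mod_cast hk
  have hk0 : (0:ℝ) < (k:ℝ) := by linarith
  rw [CB, inv_div]
  rw [div_le_iff₀ (Real.exp_pos 3)]
  have h2 : (0:ℝ) < (k : ℝ) ^ ((3 : ℝ) / 2) := Real.rpow_pos_of_pos hk0 _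
  have h1 : Real.sqrt (2 * Real.pi) * (k : ℝ) ^ ((3 : ℝ) / 2) * ((k : ℝ) - 4)
      ≤ Real.exp 3 * ((k : ℝ) ^ ((3 : ℝ) / 2) * (k:ℝ)) := by
    have ha : Real.sqrt (2 * Real.pi) * (k : ℝ) ^ ((3 : ℝ) / 2)
        ≤ Real.exp 3 * (k : ℝ) ^ ((3 : ℝ) / 2) :=
      mul_le_mul_of_nonneg_right sqrt_two_pi_le_exp3 h2.le
    have hb : Real.sqrt (2 * Real.pi) * (k : ℝ) ^ ((3 : ℝ) / 2) * ((k : ℝ) - 4)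
        ≤ Real.exp 3 * (k : ℝ) ^ ((3 : ℝ) / 2) * ((k : ℝ) - 4) :=
      mul_le_mul_of_nonneg_right ha (by linarith)
    have hcc : Real.exp 3 * (k : ℝ) ^ ((3 : ℝ) / 2) * ((k : ℝ) - 4)
        ≤ Real.exp 3 * (k : ℝ) ^ ((3 : ℝ) / 2) * (k : ℝ) :=
      mul_le_mul_of_nonneg_left (by linarith) (by positivity)
    calc Real.sqrt (2 * Real.pi) * (k : ℝ) ^ ((3 : ℝ) / 2) * ((k : ℝ) - 4)
        ≤ Real.exp 3 * (k : ℝ) ^ ((3 : ℝ) / 2) * (k : ℝ) := hb.trans hcc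
      _ = Real.exp 3 * ((k : ℝ) ^ ((3 : ℝ) / 2) * (k:ℝ)) := by ring
  refine h1.trans (le_of_eq ?_)
  rw [show (k : ℝ) ^ ((3 : ℝ) / 2) * (k:ℝ) = (k:ℝ) ^ ((5:ℝ)/2) by
    rw [show ((5:ℝ)/2) = (3:ℝ)/2 + 1 by norm_num, Real.rpow_add hk0, Real.rpow_one]]
  ring

lemma tendsto_neg_third : Tendsto (fun k : ℕ => (k:ℝ) ^ (-((1:ℝ)/3))) atTop (𝓝 0) :=
  (tendsto_rpow_neg_atTop (by norm_num)).comp tendsto_natCast_atTop_atTop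

lemma tendsto_E : Tendsto (fun k : ℕ => Real.exp ((mB k : ℝ) ^ 2 / k)) atTop (𝓝 1) := by
  have h0 : Tendsto (fun k : ℕ => (mB k : ℝ) ^ 2 / k) atTop (𝓝 0) := by
    apply squeeze_zero' (Filter.Eventually.of_forall fun k => by positivity)
    · filter_upwards [eventually_ge_atTop 1] with k hk
      have hk0 : (0:ℝ) < (k:ℝ) := by exact_mod_cast hk
      have h1 : (mB k : ℝ) ^ 2 ≤ (k:ℝ) ^ ((2:ℝ)/3) := by
        have h2 : ((k : ℝ) ^ ((1 : ℝ) / 3)) ^ (2:ℕ) = (k:ℝ) ^ ((2:ℝ)/3) := by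
          rw [← Real.rpow_natCast ((k : ℝ) ^ ((1 : ℝ) / 3)) 2, ← Real.rpow_mul hk0.le]
          norm_num
        have := mB_le k
        have h0' : (0:ℝ) ≤ (mB k : ℝ) := Nat.cast_nonneg _
        nlinarith
      calc (mB k : ℝ) ^ 2 / k ≤ (k:ℝ) ^ ((2:ℝ)/3) / k := by gcongr
        _ = (k:ℝ) ^ (-((1:ℝ)/3)) := by
            have hx : (k:ℝ) ^ (-((1:ℝ)/3)) * (k:ℝ) ^ (1:ℝ) = (k:ℝ) ^ ((2:ℝ)/3) := by
              rw [← Real.rpow_add hk0]; norm_num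
            rw [Real.rpow_one] at hx
            rw [div_eq_iff hk0.ne', hx]
    · exact tendsto_neg_third
  have := (Real.continuous_exp.tendsto 0).comp h0
  simpa [Function.comp_def] using this

lemma tendsto_D : Tendsto (fun k : ℕ => (CB k)⁻¹ ^ ((mB k : ℝ) / ((k : ℝ) - 1)))
    atTop (𝓝 1) := by
  set L : ℕ → ℝ := fun k => Real.log (CB k)⁻¹ * ((mB k : ℝ) / ((k : ℝ) - 1)) with hLdef
  have hLt : Tendsto L atTop (𝓝 0) := by
    apply squeeze_zero'
    · filter_upwards [eventually_ge_atTop 25] with k hk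
      have hk' : (25:ℝ) ≤ (k:ℝ) := by exact_mod_cast hk
      have h1 : (0:ℝ) ≤ Real.log (CB k)⁻¹ :=
        Real.log_nonneg ((one_le_inv₀ (CB_pos (by omega))).2 (CB_le_one hk))
      have h2 : (0:ℝ) ≤ (mB k : ℝ) / ((k : ℝ) - 1) := by
        apply div_nonneg (Nat.cast_nonneg _); linarith
      exact mul_nonneg h1 h2
    · filter_upwards [eventually_ge_atTop 25] with k hk
      have hk' : (25:ℝ) ≤ (k:ℝ) := by exact_mod_cast hk
      have hk0 : (0:ℝ) < (k:ℝ) := by linarith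
      have hk1 : (0:ℝ) < (k:ℝ) - 1 := by linarith
      have hroot : (0:ℝ) ≤ (k:ℝ) ^ ((1:ℝ)/3) := by positivity
      have hlog1 : Real.log (CB k)⁻¹ ≤ (5:ℝ)/2 * Real.log k := by
        calc Real.log (CB k)⁻¹ ≤ Real.log ((k:ℝ) ^ ((5:ℝ)/2)) :=
              Real.log_le_log (inv_pos.2 (CB_pos (by omega))) (CB_inv_le (by omega))
          _ = (5:ℝ)/2 * Real.log k := Real.log_rpow hk0 _
      have hlog2 : Real.log (k:ℝ) ≤ 3 * (k:ℝ) ^ ((1:ℝ)/3) := by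
        have h3 : Real.log ((k:ℝ) ^ ((1:ℝ)/3)) = (1:ℝ)/3 * Real.log k := Real.log_rpow hk0 _
        have h4 : Real.log ((k:ℝ) ^ ((1:ℝ)/3)) ≤ (k:ℝ) ^ ((1:ℝ)/3) :=
          Real.log_le_self (by positivity)
        linarith
      have hm : (mB k : ℝ) ≤ (k:ℝ) ^ ((1:ℝ)/3) := mB_le k
      have hL0 : (0:ℝ) ≤ Real.log (CB k)⁻¹ :=
        Real.log_nonneg ((one_le_inv₀ (CB_pos (by omega))).2 (CB_le_one hk))
      have step1 : L k ≤ ((15:ℝ)/2 * (k:ℝ) ^ ((1:ℝ)/3)) * ((k:ℝ) ^ ((1:ℝ)/3) / ((k : ℝ) - 1)) := by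
        have ha : Real.log (CB k)⁻¹ ≤ (15:ℝ)/2 * (k:ℝ) ^ ((1:ℝ)/3) := by nlinarith
        have hb : (mB k : ℝ) / ((k : ℝ) - 1) ≤ (k:ℝ) ^ ((1:ℝ)/3) / ((k : ℝ) - 1) := by gcongr
        have hc : (0:ℝ) ≤ (mB k : ℝ) / ((k : ℝ) - 1) :=
          div_nonneg (Nat.cast_nonneg _) (by linarith)
        exact mul_le_mul ha hb hc (by positivity)
      refine step1.trans ?_
      have h23 : (k:ℝ) ^ ((1:ℝ)/3) * (k:ℝ) ^ ((1:ℝ)/3) = (k:ℝ) ^ ((2:ℝ)/3) := by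
        rw [← Real.rpow_add hk0]; norm_num
      have hhalf : (k:ℝ)/2 ≤ (k:ℝ) - 1 := by linarith
      have step2 : (k:ℝ) ^ ((2:ℝ)/3) / ((k:ℝ) - 1) ≤ (k:ℝ) ^ ((2:ℝ)/3) / ((k:ℝ)/2) := by
        gcongr
        all_goals first | positivity | linarith
      have step3 : (k:ℝ) ^ ((2:ℝ)/3) / ((k:ℝ)/2) = 2 * (k:ℝ) ^ (-((1:ℝ)/3)) := by
        have hx : (k:ℝ) ^ (-((1:ℝ)/3)) * (k:ℝ) ^ (1:ℝ) = (k:ℝ) ^ ((2:ℝ)/3) := by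
          rw [← Real.rpow_add hk0]; norm_num
        rw [Real.rpow_one] at hx
        rw [div_eq_iff (by positivity : ((k:ℝ)/2) ≠ 0), ← hx]
        ring
      calc ((15:ℝ)/2 * (k:ℝ) ^ ((1:ℝ)/3)) * ((k:ℝ) ^ ((1:ℝ)/3) / ((k : ℝ) - 1))
          = (15:ℝ)/2 * ((k:ℝ) ^ ((2:ℝ)/3) / ((k:ℝ) - 1)) := by
            rw [← h23]; ring
        _ ≤ (15:ℝ)/2 * ((k:ℝ) ^ ((2:ℝ)/3) / ((k:ℝ)/2)) :=
            mul_le_mul_of_nonneg_left step2 (by norm_num)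
        _ = 15 * (k:ℝ) ^ (-((1:ℝ)/3)) := by rw [step3]; ring
    · have := tendsto_neg_third.const_mul (15:ℝ)
      simpa using this
  have hexp : Tendsto (fun k => Real.exp (L k)) atTop (𝓝 1) := by
    have := (Real.continuous_exp.tendsto 0).comp hLt
    simpa [Function.comp_def] using this
  refine hexp.congr' ?_
  filter_upwards [eventually_ge_atTop 25] with k hk
  rw [Real.rpow_def_of_pos (inv_pos.2 (CB_pos (by omega)))]

lemma tendsto_Q : Tendsto (fun k : ℕ => (k:ℝ) / ((k:ℝ) - 4)) atTop (𝓝 1) := by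
  have h1 : Tendsto (fun k : ℕ => (k:ℝ) - 4) atTop atTop :=
    tendsto_atTop_add_const_right _ _ tendsto_natCast_atTop_atTop
  have h2 : Tendsto (fun k : ℕ => ((k:ℝ) - 4)⁻¹) atTop (𝓝 0) := h1.inv_tendsto_atTop
  have h3 : Tendsto (fun k : ℕ => 1 + 4 * ((k:ℝ) - 4)⁻¹) atTop (𝓝 1) := by
    have := (h2.const_mul (4:ℝ)).const_add (1:ℝ)
    simpa using this
  refine h3.congr' ?_
  filter_upwards [eventually_ge_atTop 5] with k hk
  have hk' : (5:ℝ) ≤ (k:ℝ) := by exact_mod_cast hk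
  have hne : (k:ℝ) - 4 ≠ 0 := by linarith
  field_simp
  ring

lemma tendsto_gB : Tendsto gB atTop (𝓝 (1 / (Real.exp 1 - 1))) := by
  have hS : Tendsto (fun k : ℕ => Stirling.stirlingSeq (k - mB k)) atTop
      (𝓝 (Real.sqrt Real.pi)) :=
    Stirling.tendsto_stirlingSeq_sqrt_pi.comp tendsto_k_sub_mB
  have hpi : Real.sqrt Real.pi ≠ 0 := by positivity
  have hS' : Tendsto (fun k : ℕ => Stirling.stirlingSeq (k - mB k) / Real.sqrt Real.pi)
      atTop (𝓝 1) := by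
    have := hS.div_const (Real.sqrt Real.pi)
    rwa [div_self hpi] at this
  have hmain : Tendsto GB atTop (𝓝 1) := by
    have := ((hS'.mul tendsto_E).mul tendsto_D).mul tendsto_Q
    simp only [mul_one] at this; exact this
  have := hmain.mul_const (1 / (Real.exp 1 - 1))
  unfold gB
  simpa using this

set_option maxHeartbeats 1000000 in
lemma main_bound (s : ℕ → ℝ)
    (hs_ub : ∀ j : ℕ, 4 ≤ j →
      s j ≤ ((j.factorial : ℝ) / Real.exp 2) *
        (1 - 4 / (j : ℝ) + 2 / ((j : ℝ) * ((j : ℝ) - 1))))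
    (t : ℕ → ℝ)
    (htpos : ∀ k : ℕ, 5 ≤ k → 0 < t k)
    (htub : ∀ᶠ k : ℕ in atTop,
      t k ≤ Real.exp 1 / k *
        (Real.exp 3 / (Real.sqrt (2 * Real.pi) * (k : ℝ) ^ ((3 : ℝ) / 2) * ((k : ℝ) - 4)))
          ^ ((1 : ℝ) / ((k : ℝ) - 1))) :
    ∀ᶠ k : ℕ in atTop,
      (∑ j ∈ Finset.Icc (k - ⌊(k : ℝ) ^ ((1 : ℝ) / 3)⌋₊) (k - 1),
          (j : ℝ) * s j * t k ^ (j - 1)) ≤ gB k := by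
  filter_upwards [htub, eventually_ge_atTop 25, tendsto_k_sub_mB.eventually_ge_atTop 5]
    with k ht hk25 hkm
  -- notation
  set m : ℕ := mB k with hm
  have hm5 : m + 5 ≤ k := by omega
  set K : ℝ := (k : ℝ) with hK
  have hkR : (25:ℝ) ≤ K := by rw [hK]; exact_mod_cast hk25
  have hK0 : (0:ℝ) < K := by linarith
  have hK4 : (0:ℝ) < K - 4 := by linarith
  have hK1 : (0:ℝ) < K - 1 := by linarith
  have hC0 : 0 < CB k := CB_pos (by omega)
  have hC1 : CB k ≤ 1 := CB_le_one hk25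
  have htk : 0 < t k := htpos k (by omega)
  set S : ℝ := Stirling.stirlingSeq (k - m) with hSdef
  have hS0 : 0 < S := by
    have := Stirling.stirlingSeq'_pos (k - m - 1)
    rwa [show k - m - 1 + 1 = k - m by omega] at this
  set E : ℝ := Real.exp ((m : ℝ) ^ 2 / K) with hEdef
  have hE0 : 0 < E := Real.exp_pos _
  set D : ℝ := (CB k)⁻¹ ^ ((m : ℝ) / (K - 1)) with hDdef
  have hD0 : 0 < D := Real.rpow_pos_of_pos (inv_pos.2 hC0) _
  have hmK : (m : ℝ) ≤ K := by
    rw [hK]; exact_mod_cast (show m ≤ k by omega)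
  -- per-term bound
  have hterm : ∀ j ∈ Finset.Icc (k - m) (k - 1),
      (j : ℝ) * s j * t k ^ (j - 1)
        ≤ (S / Real.sqrt Real.pi * E * D * (K / (K - 4))) * Real.exp (-(K - (j:ℝ))) := by
    intro j hj
    rw [Finset.mem_Icc] at hj
    have hj5 : 5 ≤ j := by omega
    have hjk : j + 1 ≤ k := by omega
    have hkjm : k - j ≤ m := by omega
    have hjR : (5:ℝ) ≤ (j:ℝ) := by exact_mod_cast hj5
    have hj0 : (0:ℝ) < (j:ℝ) := by linarith
    have hjKle : (j:ℝ) ≤ K - 1 := by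
      have h1 : (j:ℝ) + 1 ≤ (k:ℝ) := by exact_mod_cast hjk
      rw [hK]; linarith
    have hjge : K - (m:ℝ) ≤ (j:ℝ) := by
      have h1 : ((k - m : ℕ) : ℝ) ≤ (j:ℝ) := by exact_mod_cast hj.1
      rw [Nat.cast_sub (by omega)] at h1
      rw [hK]; exact h1
    have hkj1 : (1:ℝ) ≤ K - (j:ℝ) := by linarith
    have hkjmR : K - (j:ℝ) ≤ (m:ℝ) := by linarith
    -- s_j ≤ j!/e²
    have hsub : s j ≤ (j.factorial : ℝ) / Real.exp 2 := by
      have h := hs_ub j (by omega)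
      have h1 : 1 - 4 / (j : ℝ) + 2 / ((j : ℝ) * ((j : ℝ) - 1)) ≤ 1 := by
        have h2 : 2 / ((j : ℝ) * ((j : ℝ) - 1)) ≤ 4 / (j : ℝ) := by
          rw [div_le_div_iff₀ (by nlinarith) (by linarith)]
          nlinarith
        have h3 : (0:ℝ) < 4 / (j:ℝ) := by positivity
        linarith
      have h4 : (0:ℝ) ≤ (j.factorial : ℝ) / Real.exp 2 := by positivity
      calc s j ≤ ((j.factorial : ℝ) / Real.exp 2) *
            (1 - 4 / (j : ℝ) + 2 / ((j : ℝ) * ((j : ℝ) - 1))) := h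
        _ ≤ ((j.factorial : ℝ) / Real.exp 2) * 1 := mul_le_mul_of_nonneg_left h1 h4
        _ = (j.factorial : ℝ) / Real.exp 2 := mul_one _
    -- Stirling
    have hne : Real.sqrt (2 * (j:ℝ)) * ((j:ℝ) / Real.exp 1) ^ j ≠ 0 := by positivity
    have jfact : (j.factorial : ℝ)
        = Stirling.stirlingSeq j * (Real.sqrt (2 * (j:ℝ)) * ((j:ℝ) / Real.exp 1) ^ j) := by
      rw [Stirling.stirlingSeq, div_mul_cancel₀ _ hne]
    have hstir : Stirling.stirlingSeq j ≤ S := by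
      have h := Stirling.stirlingSeq'_antitone (show k - m - 1 ≤ j - 1 by omega)
      simp only [Function.comp_apply, Nat.succ_eq_add_one] at h
      rwa [show j - 1 + 1 = j by omega, show k - m - 1 + 1 = k - m by omega] at h
    -- power of t
    have hpow : t k ^ (j-1) ≤ (Real.exp 1 / K) ^ (j-1) * CB k ^ (((j:ℝ) - 1) / (K - 1)) := by
      have h1 : t k ^ (j-1) ≤ (Real.exp 1 / K * CB k ^ ((1:ℝ) / (K - 1))) ^ (j-1) :=
        pow_le_pow_left₀ htk.le ht _
      have h2 : (Real.exp 1 / K * CB k ^ ((1:ℝ) / (K - 1))) ^ (j-1)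
          = (Real.exp 1 / K) ^ (j-1) * CB k ^ (((j:ℝ) - 1) / (K - 1)) := by
        rw [mul_pow]
        congr 1
        rw [← Real.rpow_natCast (CB k ^ ((1:ℝ) / (K - 1))) (j-1), ← Real.rpow_mul hC0.le]
        congr 1
        rw [Nat.cast_sub (by omega), Nat.cast_one]
        ring
      rwa [h2] at h1
    -- C bound
    have hCb : CB k ^ (((j:ℝ) - 1) / (K - 1)) ≤ CB k * D := by
      have hexp_ge : 1 - (m:ℝ) / (K - 1) ≤ ((j:ℝ) - 1) / (K - 1) := by
        rw [show (1:ℝ) - (m:ℝ)/(K-1) = (K - 1 - (m:ℝ))/(K-1) by field_simp]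
        exact div_le_div_of_nonneg_right (by linarith) hK1.le
      calc CB k ^ (((j:ℝ) - 1) / (K - 1)) ≤ CB k ^ (1 - (m:ℝ) / (K - 1)) :=
            Real.rpow_le_rpow_of_exponent_ge hC0 hC1 hexp_ge
        _ = CB k * D := by
            rw [hDdef, Real.rpow_sub hC0, Real.rpow_one, Real.inv_rpow hC0.le,
              div_eq_mul_inv]
    -- (j/K)^j bound
    have hjKpow : ((j:ℝ)/K) ^ j ≤ Real.exp (-(K - (j:ℝ))) * E := by
      have h1 : (j:ℝ)/K ≤ Real.exp (-(K - (j:ℝ))/K) := by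
        have := Real.add_one_le_exp (-(K - (j:ℝ))/K)
        have heq : -(K - (j:ℝ))/K + 1 = (j:ℝ)/K := by field_simp; ring
        linarith [heq ▸ this]
      have h2 : ((j:ℝ)/K) ^ j ≤ Real.exp (-(K - (j:ℝ))/K) ^ j :=
        pow_le_pow_left₀ (by positivity) h1 _
      have h3 : Real.exp (-(K - (j:ℝ))/K) ^ j = Real.exp ((j:ℝ) * (-(K - (j:ℝ))/K)) := by
        rw [← Real.exp_nat_mul]
      have h4 : (j:ℝ) * (-(K - (j:ℝ))/K) ≤ -(K - (j:ℝ)) + (m:ℝ)^2/K := by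
        rw [show (j:ℝ) * (-(K - (j:ℝ))/K) = (-(K - (j:ℝ)) * (j:ℝ))/K by ring,
          show -(K - (j:ℝ)) + (m:ℝ)^2/K = (-(K - (j:ℝ)) * K + (m:ℝ)^2)/K by field_simp]
        refine div_le_div_of_nonneg_right ?_ hK0.le
        nlinarith [mul_self_le_mul_self (by linarith : (0:ℝ) ≤ K - (j:ℝ)) hkjmR]
      calc ((j:ℝ)/K) ^ j ≤ Real.exp ((j:ℝ) * (-(K - (j:ℝ))/K)) := h3 ▸ h2
        _ ≤ Real.exp (-(K - (j:ℝ)) + (m:ℝ)^2/K) := Real.exp_le_exp.2 h4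
        _ = Real.exp (-(K - (j:ℝ))) * E := by rw [Real.exp_add, hEdef]
    -- identity A
    have he0 : Real.exp 1 ≠ 0 := (Real.exp_pos 1).ne'
    have idA : ((j:ℝ)/Real.exp 1) ^ j * (Real.exp 1 / K) ^ (j-1)
        = K / Real.exp 1 * ((j:ℝ)/K) ^ j := by
      have hj11 : j - 1 + 1 = j := by omega
      have hpj : ∀ x : ℝ, x ^ j = x * x ^ (j - 1) := fun x => by
        conv_lhs => rw [← hj11]
        rw [pow_succ']
      have e1 : ((j:ℝ)/Real.exp 1) ^ j = ((j:ℝ)/Real.exp 1) * ((j:ℝ)/Real.exp 1) ^ (j-1) :=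
        hpj _
      have e2 : ((j:ℝ)/K) ^ j = ((j:ℝ)/K) * ((j:ℝ)/K) ^ (j-1) := hpj _
      have e3 : ((j:ℝ)/Real.exp 1) ^ (j-1) * (Real.exp 1 / K) ^ (j-1)
          = ((j:ℝ)/K) ^ (j-1) := by
        rw [← mul_pow]
        congr 1
        field_simp
      rw [e1, e2, mul_assoc, e3]
      field_simp
    -- identity B
    have idB : Real.sqrt (2 * K) * (K^2 / Real.exp 3) * CB k
        = K / Real.sqrt Real.pi / (K - 4) := by
      have h32 : K ^ ((3:ℝ)/2) = K * Real.sqrt K := by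
        rw [show (3:ℝ)/2 = 1 + 1/2 by norm_num, Real.rpow_add hK0, Real.rpow_one,
          ← Real.sqrt_eq_rpow]
      have h2K : Real.sqrt (2 * K) = Real.sqrt 2 * Real.sqrt K :=
        Real.sqrt_mul (by norm_num) K
      have h2pi : Real.sqrt (2 * Real.pi) = Real.sqrt 2 * Real.sqrt Real.pi :=
        Real.sqrt_mul (by norm_num) Real.pi
      have hsqK : Real.sqrt K ≠ 0 := by positivity
      have hsq2 : Real.sqrt 2 ≠ 0 := by positivity
      have hsqpi : Real.sqrt Real.pi ≠ 0 := by positivity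
      have hexp3 : Real.exp 3 ≠ 0 := (Real.exp_pos 3).ne'
      have hK4' : K - 4 ≠ 0 := hK4.ne'
      rw [CB, ← hK, h32, h2K, h2pi]
      field_simp
    -- assembly
    have hsqj : (0:ℝ) ≤ Real.sqrt (2 * (j:ℝ)) := Real.sqrt_nonneg _
    have hsqjK : Real.sqrt (2 * (j:ℝ)) ≤ Real.sqrt (2 * K) := by
      apply Real.sqrt_le_sqrt
      have : (j:ℝ) ≤ K := by linarith
      linarith
    have hCx0 : (0:ℝ) ≤ CB k ^ (((j:ℝ) - 1) / (K - 1)) := Real.rpow_nonneg hC0.le _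
    calc (j : ℝ) * s j * t k ^ (j - 1)
        ≤ (j : ℝ) * ((j.factorial : ℝ) / Real.exp 2) * t k ^ (j - 1) := by
          apply mul_le_mul_of_nonneg_right _ (by positivity)
          exact mul_le_mul_of_nonneg_left hsub (by positivity)
      _ = (j : ℝ) * (Stirling.stirlingSeq j * (Real.sqrt (2 * (j:ℝ))
            * ((j:ℝ) / Real.exp 1) ^ j) / Real.exp 2) * t k ^ (j - 1) := by rw [jfact]
      _ ≤ (j : ℝ) * (S * (Real.sqrt (2 * (j:ℝ))
            * ((j:ℝ) / Real.exp 1) ^ j) / Real.exp 2) * t k ^ (j - 1) := by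
          apply mul_le_mul_of_nonneg_right _ (by positivity)
          apply mul_le_mul_of_nonneg_left _ (by positivity)
          apply div_le_div_of_nonneg_right ?_ (Real.exp_pos 2).le
          exact mul_le_mul_of_nonneg_right hstir (by positivity)
      _ ≤ (j : ℝ) * (S * (Real.sqrt (2 * (j:ℝ))
            * ((j:ℝ) / Real.exp 1) ^ j) / Real.exp 2)
            * ((Real.exp 1 / K) ^ (j-1) * CB k ^ (((j:ℝ) - 1) / (K - 1))) := by
          apply mul_le_mul_of_nonneg_left hpow
          positivity
      _ = (j : ℝ) * S * Real.sqrt (2 * (j:ℝ)) * (K / Real.exp 3)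
            * ((j:ℝ)/K) ^ j * CB k ^ (((j:ℝ) - 1) / (K - 1)) := by
          rw [show Real.exp 3 = Real.exp 2 * Real.exp 1 by rw [← Real.exp_add]; norm_num]
          linear_combination ((j:ℝ) * S * Real.sqrt (2 * (j:ℝ))
            * CB k ^ (((j:ℝ) - 1) / (K - 1)) / Real.exp 2) * idA
      _ ≤ K * S * Real.sqrt (2 * K) * (K / Real.exp 3)
            * (Real.exp (-(K - (j:ℝ))) * E) * (CB k * D) := by
          have hjK : (j:ℝ) ≤ K := by linarith
          have hS0' : (0:ℝ) ≤ S := hS0.le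
          have hE0' : (0:ℝ) ≤ E := hE0.le
          have hD0' : (0:ℝ) ≤ D := hD0.le
          have hC0' : (0:ℝ) ≤ CB k := hC0.le
          have hjK0 : (0:ℝ) ≤ (j:ℝ)/K := by positivity
          gcongr <;> first | assumption | positivity | linarith
      _ = (S / Real.sqrt Real.pi * E * D * (K / (K - 4))) * Real.exp (-(K - (j:ℝ))) := by
          linear_combination (S * E * D * Real.exp (-(K - (j:ℝ)))) * idB
  -- sum up
  have hsum : (∑ j ∈ Finset.Icc (k - m) (k - 1), (j : ℝ) * s j * t k ^ (j - 1))
      ≤ (S / Real.sqrt Real.pi * E * D * (K / (K - 4)))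
          * ∑ j ∈ Finset.Icc (k - m) (k - 1), Real.exp (-(K - (j:ℝ))) := by
    rw [Finset.mul_sum]
    exact Finset.sum_le_sum hterm
  have hre : ∑ j ∈ Finset.Icc (k - m) (k - 1), Real.exp (-(K - (j:ℝ)))
      = ∑ i ∈ Finset.Icc 1 m, Real.exp (-(i:ℝ)) := by
    rw [sum_Icc_reindex k m (by omega)]
    refine Finset.sum_congr rfl fun i hi => ?_
    rw [Finset.mem_Icc] at hi
    congr 1
    rw [Nat.cast_sub (by omega)]
    ring
  have hP0 : (0:ℝ) ≤ S / Real.sqrt Real.pi * E * D * (K / (K - 4)) := by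
    have hpi : (0:ℝ) < Real.sqrt Real.pi := Real.sqrt_pos.2 Real.pi_pos
    positivity
  calc (∑ j ∈ Finset.Icc (k - m) (k - 1), (j : ℝ) * s j * t k ^ (j - 1))
      ≤ (S / Real.sqrt Real.pi * E * D * (K / (K - 4)))
          * ∑ i ∈ Finset.Icc 1 m, Real.exp (-(i:ℝ)) := by rw [← hre]; exact hsum
    _ ≤ (S / Real.sqrt Real.pi * E * D * (K / (K - 4))) * (1 / (Real.exp 1 - 1)) :=
        mul_le_mul_of_nonneg_left (geom_tail_le m) hP0
    _ = gB k := by rw [gB, GB, hSdef, hEdef, hDdef, hK, hm]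

theorem stmt15 (s : ℕ → ℝ)
    (hs_lb : ∀ j : ℕ, 4 ≤ j →
      ((j.factorial : ℝ) / Real.exp 2) * (1 - 4 / (j : ℝ)) ≤ s j)
    (hs_ub : ∀ j : ℕ, 4 ≤ j →
      s j ≤ ((j.factorial : ℝ) / Real.exp 2) *
        (1 - 4 / (j : ℝ) + 2 / ((j : ℝ) * ((j : ℝ) - 1))))
    (t : ℕ → ℝ)
    (htpos : ∀ k : ℕ, 5 ≤ k → 0 < t k)
    (htub : ∀ᶠ k : ℕ in atTop,
      t k ≤ Real.exp 1 / k *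
        (Real.exp 3 / (Real.sqrt (2 * Real.pi) * (k : ℝ) ^ ((3 : ℝ) / 2) * ((k : ℝ) - 4)))
          ^ ((1 : ℝ) / ((k : ℝ) - 1))) :
    limsup (fun k : ℕ =>
        ∑ j ∈ Finset.Icc (k - ⌊(k : ℝ) ^ ((1 : ℝ) / 3)⌋₊) (k - 1),
          (j : ℝ) * s j * t k ^ (j - 1)) atTop
      ≤ 1 / (Real.exp 1 - 1) := by
  have hev := main_bound s hs_ub t htpos htub
  have hnonneg : ∀ᶠ k : ℕ in atTop, (0 : ℝ) ≤
      ∑ j ∈ Finset.Icc (k - ⌊(k : ℝ) ^ ((1 : ℝ) / 3)⌋₊) (k - 1),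
        (j : ℝ) * s j * t k ^ (j - 1) := by
    filter_upwards [tendsto_k_sub_mB.eventually_ge_atTop 5, eventually_ge_atTop 5]
      with k hk hk5
    refine Finset.sum_nonneg fun j hj => ?_
    rw [Finset.mem_Icc] at hj
    have hj4 : 4 ≤ j := by
      unfold mB at hk
      omega
    have hsj : 0 ≤ s j := by
      refine le_trans ?_ (hs_lb j hj4)
      have hj' : (4 : ℝ) ≤ (j : ℝ) := by exact_mod_cast hj4
      have h1 : (0:ℝ) ≤ 1 - 4 / (j : ℝ) := by
        rw [sub_nonneg, div_le_one (by linarith)]; linarith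
      positivity
    have ht' : 0 ≤ t k := (htpos k hk5).le
    positivity
  have hcob : IsCoboundedUnder (· ≤ ·) atTop (fun k : ℕ =>
      ∑ j ∈ Finset.Icc (k - ⌊(k : ℝ) ^ ((1 : ℝ) / 3)⌋₊) (k - 1),
        (j : ℝ) * s j * t k ^ (j - 1)) :=
    Filter.IsBoundedUnder.isCoboundedUnder_le
      ⟨0, by simpa [Filter.eventually_map] using hnonneg⟩
  calc limsup (fun k : ℕ =>
        ∑ j ∈ Finset.Icc (k - ⌊(k : ℝ) ^ ((1 : ℝ) / 3)⌋₊) (k - 1),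
          (j : ℝ) * s j * t k ^ (j - 1)) atTop
      ≤ limsup gB atTop := limsup_le_limsup hev hcob tendsto_gB.isBoundedUnder_le
    _ = 1 / (Real.exp 1 - 1) := tendsto_gB.limsup_eq
end

section
/- Let Λ(x) = ∑_{i≥2} λ_i x^i be a power series with nonnegative real coefficients, λ_2 > 0, analytic at 0 with radius of convergence R, and suppose there is a unique τ ∈ (0,R) with Λ'(τ) = 1. For k ≥ 2, let Λ_k(x) = ∑_{i=2}^k λ_i x^i. Then for each k ≥ 2 there exists a unique τ_k ∈ (0,+∞) with Λ_k'(τ_k) = 1; moreover the sequence (τ_k)_{k≥2} is decreasing and converges to τ as k → ∞. -/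
open scoped ENNReal NNReal
open Filter Topology

/-!
STATEMENT 18: Let Λ(x) = ∑_{i≥2} λ_i x^i be a power series with nonnegative real
coefficients, λ_2 > 0, analytic at 0 with radius of convergence R, and suppose
there is a unique τ ∈ (0,R) with Λ'(τ) = 1.  For k ≥ 2 let Λ_k(x) = ∑_{i=2}^k λ_i x^i.
Then for each k ≥ 2 there exists a unique τ_k ∈ (0,∞) with Λ_k'(τ_k) = 1; moreover
the sequence (τ_k)_{k≥2} is decreasing (non-increasing) and converges to τ.
-/
theorem stmt18
    (lam : ℕ → ℝ) (hlam0 : lam 0 = 0) (hlam1 : lam 1 = 0)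
    (hnonneg : ∀ i, 0 ≤ lam i) (hlam2 : 0 < lam 2)
    (R : ℝ≥0∞) (hRpos : 0 < R)
    (Lam : ℝ → ℝ)
    (hLam : ∀ x : ℝ, ENNReal.ofReal |x| < R → HasSum (fun i => lam i * x ^ i) (Lam x))
    (hdiv : ∀ x : ℝ, R < ENNReal.ofReal |x| → ¬ Summable (fun i => lam i * x ^ i))
    (Lam' : ℝ → ℝ)
    (hLam' : ∀ x : ℝ, ENNReal.ofReal |x| < R → HasDerivAt Lam (Lam' x) x)
    (τ : ℝ) (hτpos : 0 < τ) (hτR : ENNReal.ofReal τ < R) (hτ1 : Lam' τ = 1)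
    (hτuniq : ∀ x : ℝ, 0 < x → ENNReal.ofReal x < R → Lam' x = 1 → x = τ) :
    (∀ k : ℕ, 2 ≤ k →
      ∃! t : ℝ, 0 < t ∧
        deriv (fun x : ℝ => ∑ i ∈ Finset.Icc 2 k, lam i * x ^ i) t = 1) ∧
    ∀ tk : ℕ → ℝ,
      (∀ k : ℕ, 2 ≤ k → 0 < tk k ∧
        deriv (fun x : ℝ => ∑ i ∈ Finset.Icc 2 k, lam i * x ^ i) (tk k) = 1) →
      (∀ k : ℕ, 2 ≤ k → tk (k + 1) ≤ tk k) ∧ Tendsto tk atTop (𝓝 τ) := by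
  -- the derivative of the truncated polynomial
  set g : ℕ → ℝ → ℝ := fun k t => ∑ i ∈ Finset.Icc 2 k, lam i * (i * t ^ (i - 1)) with hg
  have hderiv : ∀ (k : ℕ) (t : ℝ),
      deriv (fun x : ℝ => ∑ i ∈ Finset.Icc 2 k, lam i * x ^ i) t = g k t := by
    intro k t
    exact (HasDerivAt.fun_sum fun i _ => (hasDerivAt_pow i t).const_mul (lam i)).deriv
  -- strict monotonicity of g k on [0, ∞)
  have hmono : ∀ (k : ℕ), 2 ≤ k → ∀ s t : ℝ, 0 ≤ s → s < t → g k s < g k t := by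
    intro k hk s t hs hst
    apply Finset.sum_lt_sum
    · intro i hi
      have h1 : s ^ (i - 1) ≤ t ^ (i - 1) := pow_le_pow_left₀ hs hst.le _
      have : (i : ℝ) * s ^ (i - 1) ≤ (i : ℝ) * t ^ (i - 1) :=
        mul_le_mul_of_nonneg_left h1 (Nat.cast_nonneg i)
      exact mul_le_mul_of_nonneg_left this (hnonneg i)
    · refine ⟨2, Finset.mem_Icc.2 ⟨le_rfl, hk⟩, ?_⟩
      have : (2:ℝ) * s ^ (2 - 1) < 2 * t ^ (2 - 1) := by
        norm_num; linarith
      exact mul_lt_mul_of_pos_left this hlam2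
  have hmono' : ∀ (k : ℕ), 2 ≤ k → ∀ s t : ℝ, 0 ≤ s → s ≤ t → g k s ≤ g k t := by
    intro k hk s t hs hst
    rcases eq_or_lt_of_le hst with h | h
    · rw [h]
    · exact (hmono k hk s t hs h).le
  have hg0 : ∀ k : ℕ, g k 0 = 0 := by
    intro k
    apply Finset.sum_eq_zero
    intro i hi
    have : 2 ≤ i := (Finset.mem_Icc.1 hi).1
    rw [zero_pow (by omega), mul_zero, mul_zero]
  -- existence of a root
  have hexists : ∀ k : ℕ, 2 ≤ k → ∃ t : ℝ, 0 < t ∧ g k t = 1 := by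
    intro k hk
    set T : ℝ := 1 / (2 * lam 2) with hT
    have hT0 : 0 < T := by positivity
    have hgT : 1 ≤ g k T := by
      have h2 : lam 2 * ((2:ℕ) * T ^ (2 - 1)) = 1 := by
        rw [hT]; norm_num; field_simp
      calc (1:ℝ) = lam 2 * ((2:ℕ) * T ^ (2 - 1)) := h2.symm
        _ ≤ g k T := by
            apply Finset.single_le_sum (f := fun i => lam i * ((i:ℝ) * T ^ (i - 1)))
            · intro i _
              have : (0:ℝ) ≤ (i:ℝ) * T ^ (i-1) := by positivity
              exact mul_nonneg (hnonneg i) this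
            · exact Finset.mem_Icc.2 ⟨le_rfl, hk⟩
    have hcont : ContinuousOn (g k) (Set.Icc 0 T) := by
      apply Continuous.continuousOn
      exact continuous_finset_sum _ fun i _ =>
        (continuous_const.mul (continuous_const.mul (continuous_pow (i-1))))
    have : (1:ℝ) ∈ Set.Icc (g k 0) (g k T) := by
      constructor
      · rw [hg0 k]; norm_num
      · exact hgT
    obtain ⟨t, ht, hgt⟩ := intermediate_value_Icc hT0.le hcont this
    refine ⟨t, ?_, hgt⟩
    rcases eq_or_lt_of_le ht.1 with h | h
    · exfalso; rw [← h] at hgt; rw [hg0 k] at hgt; norm_num at hgt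
    · exact h
  have part1 : ∀ k : ℕ, 2 ≤ k →
      ∃! t : ℝ, 0 < t ∧ deriv (fun x : ℝ => ∑ i ∈ Finset.Icc 2 k, lam i * x ^ i) t = 1 := by
    intro k hk
    obtain ⟨t, ht0, ht1⟩ := hexists k hk
    refine ⟨t, ⟨ht0, by rw [hderiv]; exact ht1⟩, ?_⟩
    rintro s ⟨hs0, hs1⟩
    rw [hderiv] at hs1
    by_contra hne
    rcases lt_or_gt_of_ne hne with h | h
    · have := hmono k hk s t hs0.le h; rw [hs1, ht1] at this; exact lt_irrefl _ this
    · have := hmono k hk t s ht0.le h; rw [hs1, ht1] at this; exact lt_irrefl _ this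
  -- choose radii τ < r < r1 with ofReal r1 < R
  obtain ⟨r1, hr10, hτr1E, hr1R⟩ := ENNReal.lt_iff_exists_real_btwn.1 hτR
  have hτr1 : τ < r1 := by
    by_contra h
    push_neg at h
    exact absurd hτr1E (not_lt.2 (ENNReal.ofReal_le_ofReal h))
  obtain ⟨r, hτr, hrr1⟩ : ∃ r : ℝ, τ < r ∧ r < r1 :=
    ⟨(τ + r1) / 2, by linarith, by linarith⟩
  have hr0 : 0 < r := hτpos.trans hτr
  have hr10' : 0 < r1 := lt_trans hτpos hτr1
  have hs1 : Summable (fun n => lam n * r1 ^ n) := by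
    refine (hLam r1 ?_).summable
    rwa [abs_of_pos hr10']
  set C : ℝ := ∑' n, lam n * r1 ^ n with hC
  have hCb : ∀ n, lam n * r1 ^ n ≤ C := fun n =>
    Summable.le_tsum hs1 n fun i _ => mul_nonneg (hnonneg i) (pow_nonneg hr10'.le i)
  set q : ℝ := r / r1 with hq
  have hq0 : 0 < q := div_pos hr0 hr10'
  have hq1 : q < 1 := (div_lt_one hr10').2 hrr1
  set u : ℕ → ℝ := fun n => lam n * ((n : ℝ) * r ^ (n - 1)) with hu
  have key : ∀ n, u n ≤ (C / r) * ((n : ℝ) * q ^ n) := by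
    intro n
    have hrpow : (0 : ℝ) < r1 ^ n * r := by positivity
    have heq : (C / r) * ((n : ℝ) * q ^ n) = C * ((n : ℝ) * r ^ n) / (r1 ^ n * r) := by
      rw [hq, div_pow]; ring
    rw [heq, le_div_iff₀ hrpow]
    rcases Nat.eq_zero_or_pos n with h0 | h1
    · subst h0; simp [hu]
    · have h2 : u n * (r1 ^ n * r) = (lam n * r1 ^ n) * ((n : ℝ) * (r ^ (n - 1) * r)) := by
        rw [hu]; ring
      have hrn : r ^ (n - 1) * r = r ^ n := by
        rw [← pow_succ]; congr 1; omega
      rw [h2, hrn]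
      have hnn : (0 : ℝ) ≤ (n : ℝ) * r ^ n := by positivity
      calc (lam n * r1 ^ n) * ((n : ℝ) * r ^ n) ≤ C * ((n : ℝ) * r ^ n) :=
            mul_le_mul_of_nonneg_right (hCb n) hnn
        _ = C * ((n : ℝ) * r ^ n) := rfl
  have hu_sum : Summable u := by
    have hgeo : Summable (fun n : ℕ => (C / r) * ((n : ℝ) * q ^ n)) := by
      have := (summable_pow_mul_geometric_of_norm_lt_one 1
        (r := q) (by rw [Real.norm_eq_abs, abs_of_pos hq0]; exact hq1)).mul_left (C / r)
      simpa [pow_one] using this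
    exact Summable.of_nonneg_of_le
      (fun n => mul_nonneg (hnonneg n) (by positivity)) key hgeo
  have hball : ∀ x : ℝ, x ∈ Set.Ioo (-r) r → ENNReal.ofReal |x| < R := by
    intro x hx
    have hxr : |x| ≤ r1 := by
      rw [abs_le]; exact ⟨by linarith [hx.1], by linarith [hx.2]⟩
    exact lt_of_le_of_lt (ENNReal.ofReal_le_ofReal hxr) hr1R
  have hτmem : τ ∈ Set.Ioo (-r) r := ⟨by linarith, hτr⟩
  have hDeriv : HasDerivAt (fun z : ℝ => ∑' n, lam n * z ^ n)
      (∑' n, lam n * ((n : ℝ) * τ ^ (n - 1))) τ := by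
    apply hasDerivAt_tsum_of_isPreconnected hu_sum isOpen_Ioo
      (convex_Ioo _ _).isPreconnected
      (fun n y _ => (hasDerivAt_pow n y).const_mul (lam n)) ?_ hτmem ?_ hτmem
    · intro n y hy
      rw [hu, Real.norm_eq_abs, abs_mul, abs_mul, abs_of_nonneg (hnonneg n),
        Nat.abs_cast, abs_pow]
      refine mul_le_mul_of_nonneg_left (mul_le_mul_of_nonneg_left ?_ (Nat.cast_nonneg n)) (hnonneg n)
      refine pow_le_pow_left₀ (abs_nonneg y) ?_ _
      rw [abs_le]; exact ⟨(le_of_lt hy.1), hy.2.le⟩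
    · exact (hLam τ (hball τ hτmem)).summable
  have hEq : (fun z : ℝ => ∑' n, lam n * z ^ n) =ᶠ[𝓝 τ] Lam := by
    filter_upwards [isOpen_Ioo.mem_nhds hτmem] with x hx
    exact (hLam x (hball x hx)).tsum_eq
  have hD2 : HasDerivAt Lam (∑' n, lam n * ((n : ℝ) * τ ^ (n - 1))) τ :=
    hDeriv.congr_of_eventuallyEq hEq.symm
  have hS : (∑' n, lam n * ((n : ℝ) * τ ^ (n - 1))) = 1 := by
    rw [← hτ1]
    exact hD2.unique (hLam' τ (by rwa [abs_of_pos hτpos]))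
  have hsumd : Summable (fun n => lam n * ((n : ℝ) * τ ^ (n - 1))) := by
    refine Summable.of_nonneg_of_le
      (fun n => mul_nonneg (hnonneg n) (by positivity)) (fun n => ?_) hu_sum
    exact mul_le_mul_of_nonneg_left (mul_le_mul_of_nonneg_left
      (pow_le_pow_left₀ hτpos.le hτr.le _) (Nat.cast_nonneg n)) (hnonneg n)
  have hgτle : ∀ k, g k τ ≤ 1 := by
    intro k
    rw [← hS]
    exact Summable.sum_le_tsum _ (fun i _ => mul_nonneg (hnonneg i) (by positivity)) hsumd
  have hrange : ∀ (k : ℕ),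
      ∑ i ∈ Finset.range (k + 1), lam i * ((i : ℝ) * τ ^ (i - 1)) = g k τ := by
    intro k
    rw [hg]
    refine (Finset.sum_subset ?_ ?_).symm
    · intro i hi
      simp only [Finset.mem_Icc] at hi
      simp only [Finset.mem_range]
      omega
    · intro i hi hni
      simp only [Finset.mem_range] at hi
      simp only [Finset.mem_Icc, not_and, not_le] at hni
      have : i < 2 := by omega
      interval_cases i
      · simp [hlam0]
      · simp [hlam1]
  have hgτtend : Tendsto (fun k => g k τ) atTop (𝓝 1) := by
    have h1 : Tendsto (fun n => ∑ i ∈ Finset.range n, lam i * ((i : ℝ) * τ ^ (i - 1)))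
        atTop (𝓝 1) := by
      rw [← hS]; exact hsumd.hasSum.tendsto_sum_nat
    have h2 := h1.comp (tendsto_add_atTop_nat 1)
    exact h2.congr hrange
  refine ⟨part1, ?_⟩
  intro tk htk
  have htk' : ∀ k, 2 ≤ k → 0 < tk k ∧ g k (tk k) = 1 := by
    intro k hk
    obtain ⟨h1, h2⟩ := htk k hk
    exact ⟨h1, by rwa [hderiv] at h2⟩
  have hτle : ∀ k, 2 ≤ k → τ ≤ tk k := by
    intro k hk
    by_contra h
    push_neg at h
    have h1 := hmono k hk (tk k) τ (htk' k hk).1.le h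
    rw [(htk' k hk).2] at h1
    exact absurd (hgτle k) (not_le.2 h1)
  constructor
  · intro k hk
    by_contra h
    push_neg at h
    have h1 : g (k + 1) (tk k) < g (k + 1) (tk (k + 1)) :=
      hmono (k + 1) (by omega) _ _ (htk' k hk).1.le h
    rw [(htk' (k + 1) (by omega)).2] at h1
    have h2 : g k (tk k) ≤ g (k + 1) (tk k) := by
      rw [hg]
      apply Finset.sum_le_sum_of_subset_of_nonneg
      · exact Finset.Icc_subset_Icc_right (by omega)
      · intro i _ _
        exact mul_nonneg (hnonneg i)
          (mul_nonneg (Nat.cast_nonneg i) (pow_nonneg (htk' k hk).1.le _))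
    rw [(htk' k hk).2] at h2
    linarith
  · rw [tendsto_order]
    constructor
    · intro a ha
      filter_upwards [eventually_ge_atTop 2] with k hk
      exact lt_of_lt_of_le ha (hτle k hk)
    · intro b hb
      obtain ⟨x, hτx, hxb⟩ : ∃ x : ℝ, τ < x ∧ x < b :=
        ⟨(τ + b) / 2, by linarith, by linarith⟩
      obtain ⟨δ, hδ⟩ : ∃ δ : ℝ, δ = lam 2 * (2 * x) - lam 2 * (2 * τ) := ⟨_, rfl⟩
      have hδ0 : 0 < δ := by rw [hδ]; nlinarith
      have hgap : ∀ k, 2 ≤ k → g k τ + δ ≤ g k x := by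
        intro k hk
        have hmem : 2 ∈ Finset.Icc 2 k := Finset.mem_Icc.2 ⟨le_rfl, hk⟩
        have e1 : g k τ = lam 2 * ((2 : ℕ) * τ ^ (2 - 1)) +
            ∑ i ∈ (Finset.Icc 2 k).erase 2, lam i * ((i : ℝ) * τ ^ (i - 1)) :=
          (Finset.add_sum_erase _ (fun i => lam i * ((i : ℝ) * τ ^ (i - 1))) hmem).symm
        have e2 : g k x = lam 2 * ((2 : ℕ) * x ^ (2 - 1)) +
            ∑ i ∈ (Finset.Icc 2 k).erase 2, lam i * ((i : ℝ) * x ^ (i - 1)) :=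
          (Finset.add_sum_erase _ (fun i => lam i * ((i : ℝ) * x ^ (i - 1))) hmem).symm
        have e3 : ∑ i ∈ (Finset.Icc 2 k).erase 2, lam i * ((i : ℝ) * τ ^ (i - 1))
            ≤ ∑ i ∈ (Finset.Icc 2 k).erase 2, lam i * ((i : ℝ) * x ^ (i - 1)) := by
          refine Finset.sum_le_sum fun i _ => ?_
          exact mul_le_mul_of_nonneg_left (mul_le_mul_of_nonneg_left
            (pow_le_pow_left₀ hτpos.le hτx.le _) (Nat.cast_nonneg i)) (hnonneg i)
        rw [e1, e2, hδ]
        simp only [show (2:ℕ) - 1 = 1 from rfl, pow_one, Nat.cast_ofNat]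
        linarith
      have hev : ∀ᶠ k in atTop, 1 - δ < g k τ :=
        hgτtend.eventually (eventually_gt_nhds (by linarith))
      filter_upwards [hev, eventually_ge_atTop 2] with k h1 h2
      have h3 : 1 < g k x := by
        have := hgap k h2
        linarith
      by_contra h
      push_neg at h
      have h4 : g k x ≤ g k (tk k) := hmono' k h2 x (tk k) (by linarith) (by linarith)
      rw [(htk' k h2).2] at h4
      linarith
end

section
/- Let Λ(x) = ∑_{i≥2} λ_i x^i be a power series with nonnegative real coefficients, λ_2 > 0, analytic at 0 with radius of convergence R, and suppose there is a unique τ ∈ (0,R) with Λ'(τ) = 1; set ρ = τ − Λ(τ). For k ≥ 2, let Λ_k(x) = ∑_{i=2}^k λ_i x^i, let τ_k be the unique positive solution of Λ_k'(x) = 1, and set ρ_k = τ_k − Λ_k(τ_k). Then the sequence (ρ_k)_{k≥2} converges to ρ as k → ∞. -/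
open scoped ENNReal NNReal
open Filter Topology

lemma binom_aux (r d : ℝ) (hr : 0 ≤ r) (hd : 0 ≤ d) :
    ∀ n : ℕ, ((n : ℝ) + 1) * r ^ n * d ≤ (r + d) ^ (n + 1) := by
  intro n
  induction n with
  | zero => simp; nlinarith
  | succ n ih =>
    have hpow : r ^ (n + 1) ≤ (r + d) ^ (n + 1) := pow_le_pow_left₀ hr (by linarith) _
    have h1 : ((n : ℝ) + 1) * r ^ n * d * r ≤ (r + d) ^ (n + 1) * r :=
      mul_le_mul_of_nonneg_right ih hr
    have h2 : r ^ (n + 1) * d ≤ (r + d) ^ (n + 1) * d := mul_le_mul_of_nonneg_right hpow hd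
    have key : ((n : ℝ) + 1) * r ^ n * d * r + r ^ (n + 1) * d
        ≤ (r + d) ^ (n + 1) * r + (r + d) ^ (n + 1) * d := add_le_add h1 h2
    calc ((↑(n + 1) : ℝ) + 1) * r ^ (n + 1) * d
        = ((n : ℝ) + 1) * r ^ n * d * r + r ^ (n + 1) * d := by push_cast; ring
      _ ≤ (r + d) ^ (n + 1) * r + (r + d) ^ (n + 1) * d := key
      _ = (r + d) ^ (n + 1 + 1) := by ring

lemma sum_range_eq_Icc (F : ℕ → ℝ) (h0 : F 0 = 0) (h1 : F 1 = 0) {k : ℕ} (hk : 2 ≤ k) :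
    ∑ i ∈ Finset.range (k + 1), F i = ∑ i ∈ Finset.Icc 2 k, F i := by
  rw [Finset.range_eq_Ico,
    ← Finset.sum_Ico_consecutive F (by omega : 0 ≤ 2) (by omega : 2 ≤ k + 1),
    Finset.Ico_add_one_right_eq_Icc]
  have h01 : Finset.Icc 0 1 = ({0, 1} : Finset ℕ) := by decide
  have h2 : ∑ i ∈ Finset.Icc 0 1, F i = 0 := by
    rw [h01, Finset.sum_pair (by omega : (0:ℕ) ≠ 1), h0, h1, add_zero]
  rw [show Finset.Ico 0 2 = Finset.Icc 0 1 by decide, h2, zero_add]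

/-!
STATEMENT 19: Let Λ(x) = ∑_{i≥2} λ_i x^i be a power series with nonnegative real
coefficients, λ_2 > 0, analytic at 0 with radius of convergence R, with a unique
τ ∈ (0,R) such that Λ'(τ) = 1; set ρ = τ − Λ(τ).  For k ≥ 2 let
Λ_k(x) = ∑_{i=2}^k λ_i x^i, let τ_k be the unique positive solution of
Λ_k'(x) = 1, and set ρ_k = τ_k − Λ_k(τ_k).  Then ρ_k → ρ as k → ∞.
-/
theorem stmt19
    (lam : ℕ → ℝ) (hlam0 : lam 0 = 0) (hlam1 : lam 1 = 0)
    (hnonneg : ∀ i, 0 ≤ lam i) (hlam2 : 0 < lam 2)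
    (R : ℝ≥0∞) (hRpos : 0 < R)
    (Lam : ℝ → ℝ)
    (hLam : ∀ x : ℝ, ENNReal.ofReal |x| < R → HasSum (fun i => lam i * x ^ i) (Lam x))
    (hdiv : ∀ x : ℝ, R < ENNReal.ofReal |x| → ¬ Summable (fun i => lam i * x ^ i))
    (Lam' : ℝ → ℝ)
    (hLam' : ∀ x : ℝ, ENNReal.ofReal |x| < R → HasDerivAt Lam (Lam' x) x)
    (τ : ℝ) (hτpos : 0 < τ) (hτR : ENNReal.ofReal τ < R) (hτ1 : Lam' τ = 1)
    (hτuniq : ∀ x : ℝ, 0 < x → ENNReal.ofReal x < R → Lam' x = 1 → x = τ)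
    (ρ : ℝ) (hρ : ρ = τ - Lam τ)
    (tk : ℕ → ℝ)
    (htk : ∀ k : ℕ, 2 ≤ k → 0 < tk k ∧
      deriv (fun x : ℝ => ∑ i ∈ Finset.Icc 2 k, lam i * x ^ i) (tk k) = 1)
    (rk : ℕ → ℝ)
    (hrk : ∀ k : ℕ, 2 ≤ k → rk k = tk k - ∑ i ∈ Finset.Icc 2 k, lam i * tk k ^ i) :
    Tendsto rk atTop (𝓝 ρ) := by
  -- Choose radii τ < r < r' with ofReal r' < R
  obtain ⟨r, hr0, hτr, hrR⟩ := ENNReal.lt_iff_exists_real_btwn.1 hτR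
  obtain ⟨r', hr'0, hrr', hr'R⟩ := ENNReal.lt_iff_exists_real_btwn.1 hrR
  have hrpos : 0 < r := by
    by_contra h
    push_neg at h
    have : ENNReal.ofReal r = 0 := ENNReal.ofReal_eq_zero.2 h
    rw [this] at hτr
    exact (not_lt.2 zero_le) hτr
  have hτltr : τ < r := (ENNReal.ofReal_lt_ofReal_iff hrpos).1 hτr
  have hr'pos : 0 < r' := by
    by_contra h
    push_neg at h
    have : ENNReal.ofReal r' = 0 := ENNReal.ofReal_eq_zero.2 h
    rw [this] at hrr'
    exact (not_lt.2 zero_le) hrr'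
  have hrltr' : r < r' := (ENNReal.ofReal_lt_ofReal_iff hr'pos).1 hrr'
  -- basic data
  set f' : ℕ → ℝ → ℝ := fun n x => lam n * ((n : ℝ) * x ^ (n - 1)) with hf'_def
  set u : ℕ → ℝ := fun n => lam n * ((n : ℝ) * r ^ (n - 1)) with hu_def
  set g : ℝ → ℝ := fun x => ∑' n, f' n x with hg_def
  have hτabsR : ENNReal.ofReal |τ| < R := by rwa [abs_of_pos hτpos]
  have hsum_r' : Summable fun n => lam n * r' ^ n :=
    (hLam r' (by rwa [abs_of_pos hr'pos])).summable
  have hsum_r : Summable fun n => lam n * r ^ n :=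
    (hLam r (by rwa [abs_of_pos hrpos])).summable
  have hsum_τ : Summable fun n => lam n * τ ^ n := (hLam τ hτabsR).summable
  have hu_nonneg : ∀ n, 0 ≤ u n := fun n =>
    mul_nonneg (hnonneg n) (mul_nonneg (Nat.cast_nonneg n) (pow_nonneg hrpos.le _))
  -- summability of the derivative bounds
  have hu_sum : Summable u := by
    set d := r' - r with hd_def
    have hd : 0 < d := by simp [hd_def]; linarith
    have hrd : r + d = r' := by simp [hd_def]
    apply Summable.of_nonneg_of_le hu_nonneg (fun n => ?_) (hsum_r'.mul_left d⁻¹)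
    match n with
    | 0 =>
      have : u 0 = 0 := by simp [hu_def]
      rw [this]
      exact mul_nonneg (by positivity) (mul_nonneg (hnonneg 0) (pow_nonneg hr'pos.le _))
    | (m + 1) =>
      have hb := binom_aux r d hrpos.le hd.le m
      rw [hrd] at hb
      have hA : ((m : ℝ) + 1) * r ^ m ≤ r' ^ (m + 1) / d := (le_div_iff₀ hd).2 (by linarith)
      calc u (m + 1) = lam (m + 1) * (((m : ℝ) + 1) * r ^ m) := by
            simp only [hu_def]; push_cast; ring
        _ ≤ lam (m + 1) * (r' ^ (m + 1) / d) :=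
            mul_le_mul_of_nonneg_left hA (hnonneg _)
        _ = d⁻¹ * (lam (m + 1) * r' ^ (m + 1)) := by ring
  -- derivative of each monomial
  have hf_deriv : ∀ (n : ℕ), ∀ x ∈ Set.Ioo (-r) r,
      HasDerivAt (fun y : ℝ => lam n * y ^ n) (f' n x) x :=
    fun n x _ => (hasDerivAt_pow n x).const_mul (lam n)
  have hf'_bound : ∀ (n : ℕ), ∀ x ∈ Set.Ioo (-r) r, ‖f' n x‖ ≤ u n := by
    intro n x hx
    have hxr : |x| ≤ r := (abs_lt.2 ⟨hx.1, hx.2⟩).le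
    have : ‖f' n x‖ = lam n * ((n : ℝ) * |x| ^ (n - 1)) := by
      simp only [hf'_def]
      rw [Real.norm_eq_abs, abs_mul, abs_of_nonneg (hnonneg n), abs_mul, abs_pow,
        Nat.abs_cast]
    rw [this]
    exact mul_le_mul_of_nonneg_left
      (mul_le_mul_of_nonneg_left (pow_le_pow_left₀ (abs_nonneg x) hxr _) (Nat.cast_nonneg n))
      (hnonneg n)
  have hτmem : τ ∈ Set.Ioo (-r) r := ⟨by linarith, hτltr⟩
  -- derivative of the full series on Ioo (-r) r
  have hFderiv : ∀ x ∈ Set.Ioo (-r) r,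
      HasDerivAt (fun z : ℝ => ∑' n, lam n * z ^ n) (g x) x := fun x hx =>
    hasDerivAt_tsum_of_isPreconnected hu_sum isOpen_Ioo isPreconnected_Ioo
      hf_deriv hf'_bound hτmem hsum_τ hx
  have hFeq : ∀ x ∈ Set.Ioo (-r) r, (∑' n, lam n * x ^ n) = Lam x := by
    intro x hx
    have hxa : |x| < r := abs_lt.2 ⟨hx.1, hx.2⟩
    exact (hLam x (lt_trans ((ENNReal.ofReal_lt_ofReal_iff hrpos).2 hxa) hrR)).tsum_eq
  have hgτ : g τ = 1 := by
    have heq : Lam =ᶠ[𝓝 τ] fun z : ℝ => ∑' n, lam n * z ^ n :=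
      Filter.eventuallyEq_of_mem (isOpen_Ioo.mem_nhds hτmem) fun x hx => (hFeq x hx).symm
    have h1 : HasDerivAt Lam (g τ) τ := (hFderiv τ hτmem).congr_of_eventuallyEq heq
    have h2 := hLam' τ hτabsR
    rw [← hτ1]
    exact h1.unique h2
  -- summability of derivative series for 0 ≤ x ≤ r
  have hsumf' : ∀ x : ℝ, 0 ≤ x → x ≤ r → Summable fun n => f' n x := by
    intro x hx0 hxr
    apply Summable.of_nonneg_of_le (fun n =>
      mul_nonneg (hnonneg n) (mul_nonneg (Nat.cast_nonneg n) (pow_nonneg hx0 _)))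
      (fun n => ?_) hu_sum
    exact mul_le_mul_of_nonneg_left
      (mul_le_mul_of_nonneg_left (pow_le_pow_left₀ hx0 hxr _) (Nat.cast_nonneg n)) (hnonneg n)
  -- strict monotonicity of g on [0, r]
  have hgmono : ∀ x y : ℝ, 0 ≤ x → x < y → y ≤ r → g x < g y := by
    intro x y hx hxy hyr
    have hy0 : 0 ≤ y := hx.trans hxy.le
    apply Summable.tsum_lt_tsum (i := 2) ?_ ?_ (hsumf' x hx (by linarith)) (hsumf' y hy0 hyr)
    · intro n
      exact mul_le_mul_of_nonneg_left
        (mul_le_mul_of_nonneg_left (pow_le_pow_left₀ hx hxy.le _) (Nat.cast_nonneg n))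
        (hnonneg n)
    · simp only [hf'_def]
      norm_num
      nlinarith
  -- strict monotonicity of the truncated derivative
  have hDlt : ∀ k, 2 ≤ k → ∀ x y : ℝ, 0 ≤ x → x < y →
      (∑ i ∈ Finset.Icc 2 k, f' i x) < ∑ i ∈ Finset.Icc 2 k, f' i y := by
    intro k hk x y hx hxy
    apply Finset.sum_lt_sum
    · intro i _
      exact mul_le_mul_of_nonneg_left
        (mul_le_mul_of_nonneg_left (pow_le_pow_left₀ hx hxy.le _) (Nat.cast_nonneg i))
        (hnonneg i)
    · refine ⟨2, Finset.mem_Icc.2 ⟨le_refl 2, hk⟩, ?_⟩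
      simp only [hf'_def]
      norm_num
      nlinarith
  -- the derivative of the truncation
  have hD : ∀ k, ∀ x : ℝ, HasDerivAt (fun y : ℝ => ∑ i ∈ Finset.Icc 2 k, lam i * y ^ i)
      (∑ i ∈ Finset.Icc 2 k, f' i x) x := fun k x =>
    HasDerivAt.fun_sum fun i _ => (hasDerivAt_pow i x).const_mul (lam i)
  have htk1 : ∀ k, 2 ≤ k → ∑ i ∈ Finset.Icc 2 k, f' i (tk k) = 1 := fun k hk =>
    ((hD k (tk k)).deriv).symm.trans (htk k hk).2
  -- τ ≤ tk k
  have hτle : ∀ k, 2 ≤ k → τ ≤ tk k := by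
    intro k hk
    by_contra h
    push_neg at h
    have h1 : (∑ i ∈ Finset.Icc 2 k, f' i τ) ≤ g τ :=
      Summable.sum_le_tsum _ (fun i _ =>
        mul_nonneg (hnonneg i) (mul_nonneg (Nat.cast_nonneg i) (pow_nonneg hτpos.le _)))
        (hsumf' τ hτpos.le hτltr.le)
    have h2 := hDlt k hk (tk k) τ (htk k hk).1.le h
    rw [htk1 k hk] at h2
    rw [hgτ] at h1
    linarith
  -- eventually tk k < x whenever τ < x ≤ r
  have hev_lt : ∀ x : ℝ, τ < x → x ≤ r → ∀ᶠ k in atTop, tk k < x := by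
    intro x hx hxr
    have hx0 : 0 < x := hτpos.trans hx
    have hgx : 1 < g x := by
      rw [← hgτ]
      exact hgmono τ x hτpos.le hx hxr
    have hps : Tendsto (fun k => ∑ i ∈ Finset.Icc 2 k, f' i x) atTop (𝓝 (g x)) := by
      have h1 : Tendsto (fun n => ∑ i ∈ Finset.range n, f' i x) atTop (𝓝 (g x)) :=
        ((hsumf' x hx0.le hxr).hasSum).tendsto_sum_nat
      have h2 := h1.comp (tendsto_add_atTop_nat 1)
      apply h2.congr'
      filter_upwards [eventually_ge_atTop 2] with k hk
      exact sum_range_eq_Icc (fun i => f' i x) (by simp [hf'_def, hlam0])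
        (by simp [hf'_def, hlam1]) hk
    filter_upwards [hps.eventually_const_lt hgx, eventually_ge_atTop 2] with k h1 h2
    by_contra hcon
    push_neg at hcon
    rcases eq_or_lt_of_le hcon with he | hlt
    · rw [he, htk1 k h2] at h1
      exact lt_irrefl _ h1
    · have h3 := hDlt k h2 x (tk k) hx0.le hlt
      rw [htk1 k h2] at h3
      linarith
  -- tk → τ
  have htkτ : Tendsto tk atTop (𝓝 τ) := by
    rw [tendsto_order]
    constructor
    · intro a ha
      filter_upwards [eventually_ge_atTop 2] with k hk
      exact ha.trans_le (hτle k hk)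
    · intro a ha
      have hmin : τ < min a r := lt_min ha hτltr
      filter_upwards [hev_lt (min a r) hmin (min_le_right _ _)] with k hk
      exact hk.trans_le (min_le_left _ _)
  have hcontτ : ContinuousAt Lam τ := (hLam' τ hτabsR).continuousAt
  have hLamtk : Tendsto (fun k => Lam (tk k)) atTop (𝓝 (Lam τ)) := hcontτ.tendsto.comp htkτ
  -- tail bound tendsto 0
  have hc0 : Tendsto (fun k => ∑' i, lam (i + (k + 1)) * r ^ (i + (k + 1))) atTop (𝓝 0) := by
    have h1 := (tendsto_sum_nat_add fun n => lam n * r ^ n).comp (tendsto_add_atTop_nat 1)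
    exact h1
  -- eventual sandwich for the remainder
  have hev : ∀ᶠ k in atTop,
      0 ≤ Lam (tk k) - ∑ i ∈ Finset.Icc 2 k, lam i * tk k ^ i ∧
      Lam (tk k) - ∑ i ∈ Finset.Icc 2 k, lam i * tk k ^ i
        ≤ ∑' i, lam (i + (k + 1)) * r ^ (i + (k + 1)) := by
    filter_upwards [eventually_ge_atTop 2, hev_lt r hτltr le_rfl] with k hk hkr
    have hx0 : 0 < tk k := (htk k hk).1
    have hxr : tk k ≤ r := hkr.le
    have hxR : ENNReal.ofReal |tk k| < R := by
      rw [abs_of_pos hx0]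
      exact lt_trans ((ENNReal.ofReal_lt_ofReal_iff hrpos).2 hkr) hrR
    have hs := hLam (tk k) hxR
    have hsum_x : Summable fun n => lam n * tk k ^ n := hs.summable
    have hkey : ∑ i ∈ Finset.range (k + 1), lam i * tk k ^ i
        + ∑' i, lam (i + (k + 1)) * tk k ^ (i + (k + 1)) = Lam (tk k) := by
      rw [hsum_x.sum_add_tsum_nat_add (k + 1), hs.tsum_eq]
    have hrange : ∑ i ∈ Finset.range (k + 1), lam i * tk k ^ i
        = ∑ i ∈ Finset.Icc 2 k, lam i * tk k ^ i :=
      sum_range_eq_Icc _ (by simp [hlam0]) (by simp [hlam1]) hk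
    have htail_nonneg : 0 ≤ ∑' i, lam (i + (k + 1)) * tk k ^ (i + (k + 1)) :=
      tsum_nonneg fun i => mul_nonneg (hnonneg _) (pow_nonneg hx0.le _)
    have htail_le : (∑' i, lam (i + (k + 1)) * tk k ^ (i + (k + 1)))
        ≤ ∑' i, lam (i + (k + 1)) * r ^ (i + (k + 1)) :=
      Summable.tsum_le_tsum
        (fun i => mul_le_mul_of_nonneg_left (pow_le_pow_left₀ hx0.le hxr _) (hnonneg _))
        ((summable_nat_add_iff (f := fun n => lam n * tk k ^ n) (k + 1)).2 hsum_x)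
        ((summable_nat_add_iff (f := fun n => lam n * r ^ n) (k + 1)).2 hsum_r)
    constructor
    · linarith
    · linarith
  have hdiff0 : Tendsto
      (fun k => Lam (tk k) - ∑ i ∈ Finset.Icc 2 k, lam i * tk k ^ i) atTop (𝓝 0) :=
    tendsto_of_tendsto_of_tendsto_of_le_of_le' tendsto_const_nhds hc0
      (hev.mono fun k h => h.1) (hev.mono fun k h => h.2)
  have hmain : Tendsto (fun k => (tk k - Lam (tk k))
      + (Lam (tk k) - ∑ i ∈ Finset.Icc 2 k, lam i * tk k ^ i)) atTop
      (𝓝 ((τ - Lam τ) + 0)) := (htkτ.sub hLamtk).add hdiff0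
  rw [hρ]
  have heq : (fun k => (tk k - Lam (tk k))
      + (Lam (tk k) - ∑ i ∈ Finset.Icc 2 k, lam i * tk k ^ i)) =ᶠ[atTop] rk := by
    filter_upwards [eventually_ge_atTop 2] with k hk
    rw [hrk k hk]
    ring
  exact Tendsto.congr' heq (by simpa using hmain)
end
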